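/- arXiv:2209.02767 — 6 statements merged into one kernel-verified Lean document; each statement's English description precedes it below -/
import Mathlib

section
/- Let N = (P,T,F) be a continuous Petri net, let U ⊆ T, and let m_src, m_tgt ∈ (ℝ≥0)^P. Then m_src ⇝_U m_tgt (i.e., m_tgt is reachable from m_src by a firing sequence whose support is exactly U) if and only if the following three conditions all hold: (1) some vector x ∈ (ℝ≥0)^T with support exactly U satisfies m_src + F·x = m_tgt; (2) some firing sequence with support exactly U is enabled at m_src; and (3) some firing sequence with support exactly U is backward-enabled at m_tgt. -/
/-- A continuous Petri net `N = (P, T, F)` with places `P`, transitions `T`,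
and flow matrices `F₋, F₊ : P × T → ℕ`. -/
structure PetriNet (P T : Type*) where
  Fminus : P → T → ℕ
  Fplus : P → T → ℕ

namespace PetriNet

variable {P T : Type*}

/-- `pre(t)`: the column of `F₋` associated to transition `t`, as a real vector. -/
def pre (N : PetriNet P T) (t : T) : P → ℝ := fun p => (N.Fminus p t : ℝ)

/-- `post(t)`: the column of `F₊` associated to transition `t`, as a real vector. -/
def post (N : PetriNet P T) (t : T) : P → ℝ := fun p => (N.Fplus p t : ℝ)

/-- The transpose net `N^T := (P, T, (F₊, F₋))`. -/
def transpose (N : PetriNet P T) : PetriNet P T := ⟨N.Fplus, N.Fminus⟩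

/-- `m →(αt) m'` : transition `t` is `α`-fired (α > 0) from `m`, leading to `m'`. -/
def fire (N : PetriNet P T) (t : T) (α : ℝ) (m m' : P → ℝ) : Prop :=
  0 < α ∧ (∀ p, α * N.pre t p ≤ m p) ∧
    ∀ p, m' p = m p + α * (N.post t p - N.pre t p)

/-- Firing a sequence `σ = α₁t₁ ⋯ αₙtₙ` (a list of (amount, transition) pairs)
from `m` to `m'`. -/
def fireSeq (N : PetriNet P T) : List (ℝ × T) → (P → ℝ) → (P → ℝ) → Prop
  | [], m, m' => m = m'
  | (α, t) :: σ, m, m' => ∃ m₁, N.fire t α m m₁ ∧ N.fireSeq σ m₁ m'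

/-- The support of a firing sequence: the set of transitions occurring in it. -/
def seqSupport (σ : List (ℝ × T)) : Set T := {t | ∃ α : ℝ, (α, t) ∈ σ}

end PetriNet

namespace PetriNet

variable {P T : Type*}

/-- `m ⇝_U m'` : some firing sequence with support exactly `U` leads from `m` to `m'`. -/
def reachSupp (N : PetriNet P T) (U : Set T) (m m' : P → ℝ) : Prop :=
  ∃ σ : List (ℝ × T), N.fireSeq σ m m' ∧ seqSupport σ = U

/-- `σ` is enabled at `m`. -/
def enabledSeq (N : PetriNet P T) (σ : List (ℝ × T)) (m : P → ℝ) : Prop :=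
  ∃ m', N.fireSeq σ m m'

/-- `σ` is backward-enabled at `m`: its reverse can be fired from `m` in the transpose net. -/
def backwardEnabledSeq (N : PetriNet P T) (σ : List (ℝ × T)) (m : P → ℝ) : Prop :=
  ∃ m', N.transpose.fireSeq σ.reverse m m'

end PetriNet

open PetriNet

namespace PetriNet

variable {P T : Type*}

lemma pre_nonneg (N : PetriNet P T) (t : T) (p : P) : 0 ≤ N.pre t p := Nat.cast_nonneg _
lemma post_nonneg (N : PetriNet P T) (t : T) (p : P) : 0 ≤ N.post t p := Nat.cast_nonneg _

lemma transpose_pre (N : PetriNet P T) : N.transpose.pre = N.post := rfl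
lemma transpose_post (N : PetriNet P T) : N.transpose.post = N.pre := rfl
lemma transpose_transpose (N : PetriNet P T) : N.transpose.transpose = N := rfl

lemma fire_symm {N : PetriNet P T} {t : T} {α : ℝ} {m m' : P → ℝ}
    (h : N.fire t α m m') : N.transpose.fire t α m' m := by
  obtain ⟨hα, hen, heq⟩ := h
  refine ⟨hα, fun p => ?_, fun p => ?_⟩
  · have h1 := hen p; have h2 := heq p
    simp only [transpose_pre]
    nlinarith [pre_nonneg N t p]
  · have h2 := heq p
    simp only [transpose_pre, transpose_post]
    linarith

lemma fire_nonneg {N : PetriNet P T} {t : T} {α : ℝ} {m m' : P → ℝ}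
    (h : N.fire t α m m') (p : P) : 0 ≤ m' p := by
  obtain ⟨hα, hen, heq⟩ := h
  have h1 := hen p; have h2 := heq p
  nlinarith [post_nonneg N t p]

lemma fireSeq_append_of {N : PetriNet P T} :
    ∀ {σ τ : List (ℝ × T)} {m m' m'' : P → ℝ},
      N.fireSeq σ m m' → N.fireSeq τ m' m'' → N.fireSeq (σ ++ τ) m m''
  | [], τ, m, m', m'', h1, h2 => by
      rw [List.nil_append]; cases h1; exact h2
  | (α, t) :: σ, τ, m, m', m'', h1, h2 => by
      obtain ⟨m₁, hf, hs⟩ := h1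
      exact ⟨m₁, hf, fireSeq_append_of hs h2⟩

lemma fireSeq_reverse {N : PetriNet P T} :
    ∀ {σ : List (ℝ × T)} {m m' : P → ℝ},
      N.fireSeq σ m m' → N.transpose.fireSeq σ.reverse m' m
  | [], m, m', h => by cases h; rfl
  | (α, t) :: σ, m, m', h => by
      obtain ⟨m₁, hf, hs⟩ := h
      rw [List.reverse_cons]
      exact fireSeq_append_of (fireSeq_reverse hs) ⟨m, fire_symm hf, rfl⟩

lemma fireSeq_nonneg {N : PetriNet P T} :
    ∀ {σ : List (ℝ × T)} {m m' : P → ℝ},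
      (∀ p, 0 ≤ m p) → N.fireSeq σ m m' → ∀ p, 0 ≤ m' p
  | [], m, m', hm, h => by cases h; exact hm
  | (α, t) :: σ, m, m', hm, h => by
      obtain ⟨m₁, hf, hs⟩ := h
      exact fireSeq_nonneg (fire_nonneg hf) hs

lemma fireSeq_mem_pos {N : PetriNet P T} :
    ∀ {σ : List (ℝ × T)} {m m' : P → ℝ},
      N.fireSeq σ m m' → ∀ q ∈ σ, (0:ℝ) < q.1
  | [], m, m', h, q, hq => by simp at hq
  | (α, t) :: σ, m, m', h, q, hq => by
      obtain ⟨m₁, hf, hs⟩ := h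
      rcases List.mem_cons.mp hq with h' | h'
      · subst h'; exact hf.1
      · exact fireSeq_mem_pos hs q h'

@[simp] lemma seqSupport_nil : seqSupport ([] : List (ℝ × T)) = ∅ := by
  ext t; simp [seqSupport]

lemma seqSupport_cons (a : ℝ × T) (σ : List (ℝ × T)) :
    seqSupport (a :: σ) = insert a.2 (seqSupport σ) := by
  ext t
  simp only [seqSupport, Set.mem_setOf_eq, List.mem_cons, Set.mem_insert_iff, Prod.ext_iff]
  aesop

lemma seqSupport_append (σ τ : List (ℝ × T)) :
    seqSupport (σ ++ τ) = seqSupport σ ∪ seqSupport τ := by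
  ext t
  simp only [seqSupport, Set.mem_setOf_eq, List.mem_append, Set.mem_union]
  exact ⟨fun ⟨α, h⟩ => h.imp (⟨α, ·⟩) (⟨α, ·⟩),
    fun h => h.elim (fun ⟨α, h⟩ => ⟨α, Or.inl h⟩) (fun ⟨α, h⟩ => ⟨α, Or.inr h⟩)⟩

@[simp] lemma seqSupport_reverse (σ : List (ℝ × T)) :
    seqSupport σ.reverse = seqSupport σ := by
  ext t; simp [seqSupport]

lemma seqSupport_map_scale (c : ℝ) (σ : List (ℝ × T)) :
    seqSupport (σ.map fun q => (c * q.1, q.2)) = seqSupport σ := by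
  ext t
  simp only [seqSupport, Set.mem_setOf_eq, List.mem_map, Prod.ext_iff]
  constructor
  · rintro ⟨α, q, hq, h1, h2⟩; subst h2; exact ⟨q.1, by rwa [← Prod.mk.eta (p := q)] at hq⟩
  · rintro ⟨α, h⟩; exact ⟨c * α, (α, t), h, rfl, rfl⟩

end PetriNet

namespace PetriNet

variable {P T : Type*}

/-- The Parikh vector (total amount fired per transition) of a firing sequence. -/
def ppar [DecidableEq T] (σ : List (ℝ × T)) (t : T) : ℝ :=
  (σ.map fun q => if q.2 = t then q.1 else 0).sum

section Parikh
variable [DecidableEq T]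

@[simp] lemma ppar_nil (t : T) : ppar ([] : List (ℝ × T)) t = 0 := rfl

lemma ppar_cons (a : ℝ × T) (σ : List (ℝ × T)) (t : T) :
    ppar (a :: σ) t = (if a.2 = t then a.1 else 0) + ppar σ t := by
  simp [ppar]

lemma ppar_nonneg {σ : List (ℝ × T)} (h : ∀ q ∈ σ, (0:ℝ) ≤ q.1) (t : T) :
    0 ≤ ppar σ t := by
  apply List.sum_nonneg
  intro y hy
  rcases List.mem_map.mp hy with ⟨q, hq, rfl⟩
  split_ifs
  · exact h q hq
  · exact le_refl 0

lemma ppar_eq_zero {σ : List (ℝ × T)} {t : T} (h : t ∉ seqSupport σ) :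
    ppar σ t = 0 := by
  apply List.sum_eq_zero
  intro y hy
  rcases List.mem_map.mp hy with ⟨q, hq, rfl⟩
  split_ifs with hq2
  · exact absurd ⟨q.1, by rw [← hq2, Prod.mk.eta]; exact hq⟩ h
  · rfl

lemma ppar_pos {σ : List (ℝ × T)} (hpos : ∀ q ∈ σ, (0:ℝ) < q.1) {t : T}
    (ht : t ∈ seqSupport σ) : 0 < ppar σ t := by
  induction σ with
  | nil => simp [seqSupport] at ht
  | cons a σ ih =>
      rw [ppar_cons]
      have hσ : ∀ q ∈ σ, (0:ℝ) < q.1 := fun q hq => hpos q (List.mem_cons_of_mem _ hq)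
      rw [seqSupport_cons, Set.mem_insert_iff] at ht
      by_cases ha : a.2 = t
      · simp only [ha, if_true]
        have := ppar_nonneg (fun q hq => (hσ q hq).le) t
        linarith [hpos a List.mem_cons_self]
      · simp only [ha, if_false, zero_add]
        rcases ht with h | h
        · exact absurd h.symm ha
        · exact ih hσ h

lemma ppar_map_scale (c : ℝ) (σ : List (ℝ × T)) (t : T) :
    ppar (σ.map fun q => (c * q.1, q.2)) t = c * ppar σ t := by
  induction σ with
  | nil => simp [ppar]
  | cons a σ ih =>
      simp only [List.map_cons, ppar_cons] at *
      rw [ih]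
      split_ifs <;> ring

lemma ppar_mem_support {σ : List (ℝ × T)} {t : T} (h : ppar σ t ≠ 0) :
    t ∈ seqSupport σ := by
  by_contra hc; exact h (ppar_eq_zero hc)

end Parikh

section StateEq
variable [Fintype T] [DecidableEq T]

lemma fireSeq_stateEq {N : PetriNet P T} :
    ∀ {σ : List (ℝ × T)} {m m' : P → ℝ}, N.fireSeq σ m m' →
      ∀ p, m' p = m p + ∑ t, (N.post t p - N.pre t p) * ppar σ t
  | [], m, m', h, p => by cases h; simp
  | (α, t₀) :: σ, m, m', h, p => by
      obtain ⟨m₁, hf, hs⟩ := h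
      have ih := fireSeq_stateEq hs p
      have hstep := hf.2.2 p
      have hsum : ∑ t, (N.post t p - N.pre t p) * ppar ((α, t₀) :: σ) t
          = (N.post t₀ p - N.pre t₀ p) * α + ∑ t, (N.post t p - N.pre t p) * ppar σ t := by
        have : ∀ t, (N.post t p - N.pre t p) * ppar ((α, t₀) :: σ) t
            = (if t₀ = t then (N.post t p - N.pre t p) * α else 0)
              + (N.post t p - N.pre t p) * ppar σ t := by
          intro t
          rw [ppar_cons]
          by_cases h : t₀ = t
          · simp only [h, if_pos rfl]; simp [if_pos rfl]; ring
          · have h' : ¬((α, t₀).2 = t) := h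
            simp only [if_neg h]
            simp only [h', if_false, zero_add]
        rw [Finset.sum_congr rfl (fun t _ => this t), Finset.sum_add_distrib,
          Finset.sum_ite_eq Finset.univ t₀ (fun t => (N.post t p - N.pre t p) * α)]
        simp
      rw [hsum]
      linarith

end StateEq

lemma scale_mono {N : PetriNet P T} :
    ∀ {σ : List (ℝ × T)} {m m' : P → ℝ}, N.fireSeq σ m m' →
      ∀ {c : ℝ}, 0 < c → ∀ {mt : P → ℝ}, (∀ p, c * m p ≤ mt p) →
      N.fireSeq (σ.map fun q => (c * q.1, q.2)) mt (fun p => mt p + c * (m' p - m p))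
  | [], m, m', h, c, hc, mt, hmt => by
      cases h
      rw [List.map_nil]
      show mt = _
      funext p
      show mt p = mt p + c * (m p - m p)
      ring
  | (α, t) :: σ, m, m', h, c, hc, mt, hmt => by
      obtain ⟨m₁, ⟨hα, hen, hstep⟩, hs⟩ := h
      rw [List.map_cons]
      refine ⟨fun p => mt p + (c * α) * (N.post t p - N.pre t p), ⟨mul_pos hc hα,
        fun p => ?_, fun p => rfl⟩, ?_⟩
      · have h1 := hen p
        have h2 := hmt p
        nlinarith
      · have ih := scale_mono hs hc (mt := fun p => mt p + (c * α) * (N.post t p - N.pre t p))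
          (fun p => by
            have h2 := hmt p
            have key : c * m₁ p = c * m p + (c * α) * (N.post t p - N.pre t p) := by
              rw [hstep p]; ring
            linarith)
        have : (fun p => (fun p => mt p + (c * α) * (N.post t p - N.pre t p)) p
            + c * (m' p - m₁ p)) = (fun p => mt p + c * (m' p - m p)) := by
          funext p; simp only; rw [hstep p]; ring
        rwa [this] at ih

lemma chunk {N : PetriNet P T} :
    ∀ (todo : List T) (β : T → ℝ) (m : P → ℝ),
      (∀ t ∈ todo, 0 < β t) →
      (∀ p, ((todo.map fun t => β t * N.pre t p).sum ≤ m p)) →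
      N.fireSeq (todo.map fun t => (β t, t)) m
        (fun p => m p + (todo.map fun t => β t * (N.post t p - N.pre t p)).sum)
  | [], β, m, hβ, hm => by
      have : (fun p => m p + (([] : List T).map
          fun t => β t * (N.post t p - N.pre t p)).sum) = m := by
        funext p; simp
      rw [List.map_nil, this]; rfl
  | t :: todo, β, m, hβ, hm => by
      rw [List.map_cons]
      have htail : ∀ p, 0 ≤ (todo.map fun s => β s * N.pre s p).sum := by
        intro p
        apply List.sum_nonneg
        intro y hy
        rcases List.mem_map.mp hy with ⟨s, hs, rfl⟩
        exact mul_nonneg (hβ s (List.mem_cons_of_mem _ hs)).le (pre_nonneg N s p)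
      have hm' : ∀ p, β t * N.pre t p ≤ m p := by
        intro p
        have := hm p
        rw [List.map_cons, List.sum_cons] at this
        linarith [htail p]
      refine ⟨fun p => m p + β t * (N.post t p - N.pre t p),
        ⟨hβ t List.mem_cons_self, hm', fun p => rfl⟩, ?_⟩
      have ih := chunk todo β (fun p => m p + β t * (N.post t p - N.pre t p))
        (fun s hs => hβ s (List.mem_cons_of_mem _ hs))
        (fun p => by
          have h1 := hm p
          rw [List.map_cons, List.sum_cons] at h1
          have h2 := mul_nonneg (hβ t List.mem_cons_self).le (post_nonneg N t p)
          nlinarith)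
      have : (fun p => (fun p => m p + β t * (N.post t p - N.pre t p)) p
          + (todo.map fun s => β s * (N.post s p - N.pre s p)).sum)
          = (fun p => m p + ((t :: todo).map fun s => β s * (N.post s p - N.pre s p)).sum) := by
        funext p
        rw [List.map_cons, List.sum_cons]
        simp only
        ring
      rwa [this] at ih

end PetriNet

namespace PetriNet

variable {P T : Type*}

/-- Core firing lemma: if the state equation holds with support `U` and both endpoint
markings dominate a positive multiple of `pre + post` of every transition of `U`,
then `m₂` is reachable from `m₁` with support exactly `U`. -/
lemma core (N : PetriNet P T) [Fintype T] [DecidableEq T] (U : Set T) (x : T → ℝ)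
    (m₁ m₂ : P → ℝ) (hx : ∀ t, 0 ≤ x t) (hxs : ∀ t, 0 < x t ↔ t ∈ U)
    (hm₁ : ∀ p, 0 ≤ m₁ p) (hm₂ : ∀ p, 0 ≤ m₂ p)
    (heq : ∀ p, m₂ p = m₁ p + ∑ t, (N.post t p - N.pre t p) * x t)
    (c : ℝ) (hc : 0 < c)
    (hb1 : ∀ t ∈ U, ∀ p, c * (N.pre t p + N.post t p) ≤ m₁ p)
    (hb2 : ∀ t ∈ U, ∀ p, c * (N.pre t p + N.post t p) ≤ m₂ p) :
    N.reachSupp U m₁ m₂ := by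
  classical
  by_cases hUe : U = ∅
  · -- then x = 0 and m₁ = m₂
    have hx0 : ∀ t, x t = 0 := by
      intro t
      rcases eq_or_lt_of_le (hx t) with h | h
      · exact h.symm
      · exact absurd ((hxs t).mp h) (by simp [hUe])
    refine ⟨[], ?_, by simp [hUe]⟩
    show m₁ = m₂
    funext p
    have := heq p
    simp [hx0] at this
    linarith
  · have hUne : U.Nonempty := Set.nonempty_iff_ne_empty.mpr hUe
    set s : Finset T := Finset.univ.filter (· ∈ U) with hs_def
    have hsmem : ∀ t, t ∈ s ↔ t ∈ U := by
      intro t; simp [hs_def]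
    set L : List T := s.toList with hL_def
    have hLmem : ∀ t, t ∈ L ↔ t ∈ U := by
      intro t; rw [hL_def, Finset.mem_toList]; exact hsmem t
    have hLnd : L.Nodup := Finset.nodup_toList s
    have hLtF : L.toFinset = s := Finset.toList_toFinset s
    set X : ℝ := ∑ t, x t with hX_def
    have hX0 : 0 ≤ X := Finset.sum_nonneg fun t _ => hx t
    obtain ⟨n₀, hn₀⟩ := exists_nat_ge (X / c)
    set n : ℕ := n₀ + 1 with hn_def
    set ν : ℝ := (n : ℝ) with hν_def
    have hν : 0 < ν := by positivity
    have hXν : X ≤ ν * c := by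
      have h1 : X / c ≤ ν := le_trans hn₀ (by rw [hν_def, hn_def]; exact_mod_cast Nat.le_succ n₀)
      calc X = (X / c) * c := by field_simp
        _ ≤ ν * c := by nlinarith
    set E : P → ℝ := fun p => ∑ t, (N.post t p - N.pre t p) * x t with hE_def
    set g : ℕ → P → ℝ := fun k p => m₁ p + (k : ℝ) / ν * E p with hg_def
    set ρ : List (ℝ × T) := L.map (fun t => (x t / ν, t)) with hρ_def
    -- the sum of x over s equals X
    have hsX : ∑ t ∈ s, x t = X := by
      rw [hX_def]
      apply Finset.sum_subset (Finset.subset_univ s)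
      intro t _ ht
      rcases eq_or_lt_of_le (hx t) with h | h
      · exact h.symm
      · exact absurd ((hsmem t).mpr ((hxs t).mp h)) ht
    -- list sums over L as Finset sums over s
    have hlist : ∀ (f : T → ℝ), (L.map f).sum = ∑ t ∈ s, f t := by
      intro f
      rw [← List.sum_toFinset f hLnd, hLtF]
    -- bound on the per-round consumption
    have hD : ∀ p, (∑ t ∈ s, (x t / ν) * N.pre t p) ≤ m₁ p
        ∧ (∑ t ∈ s, (x t / ν) * N.pre t p) ≤ m₂ p := by
      intro p
      have key : ∀ mm : P → ℝ, (∀ t ∈ U, ∀ p, c * (N.pre t p + N.post t p) ≤ mm p) →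
          (0 ≤ mm p) → (∑ t ∈ s, (x t / ν) * N.pre t p) ≤ mm p := by
        intro mm hb hmm
        have step : ∀ t ∈ s, (x t / ν) * N.pre t p ≤ x t * mm p / (ν * c) := by
          intro t ht
          have hbt := hb t ((hsmem t).mp ht) p
          have hxt := hx t
          have hpost := N.post_nonneg t p
          have hpre := N.pre_nonneg t p
          rw [div_mul_eq_mul_div, div_le_div_iff₀ hν (by positivity)]
          -- x t * pre * (ν * c) ≤ x t * mm p * ν
          have h1 : N.pre t p * c ≤ mm p := by nlinarith
          nlinarith [mul_le_mul_of_nonneg_left h1 (mul_nonneg hxt hν.le)]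
        calc (∑ t ∈ s, (x t / ν) * N.pre t p) ≤ ∑ t ∈ s, x t * mm p / (ν * c) :=
              Finset.sum_le_sum step
          _ = (∑ t ∈ s, x t) * mm p / (ν * c) := by rw [← Finset.sum_div, ← Finset.sum_mul]
          _ = X * mm p / (ν * c) := by rw [hsX]
          _ ≤ mm p := by
              rw [div_le_iff₀ (by positivity)]
              nlinarith
      exact ⟨key m₁ hb1 (hm₁ p), key m₂ hb2 (hm₂ p)⟩
    -- one round
    have round : ∀ k : ℕ, k ≤ n → N.fireSeq ρ (g k) (g (k + 1)) := by
      intro k hk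
      have hch := N.chunk L (fun t => x t / ν) (g k)
        (fun t ht => div_pos ((hxs t).mpr ((hLmem t).mp ht)) hν)
        (fun p => by
          rw [hlist]
          have hDp := hD p
          have hkν : 0 ≤ (k : ℝ) / ν ∧ (k : ℝ) / ν ≤ 1 := by
            constructor
            · positivity
            · rw [div_le_one hν, hν_def]
              exact_mod_cast hk
          have hgk : g k p = m₁ p + (k : ℝ) / ν * E p := rfl
          have hm2p : m₂ p = m₁ p + E p := heq p
          nlinarith [hkν.1, hkν.2, hDp.1, hDp.2])
      have hend : (fun p => g k p + (L.map fun t => (x t / ν) * (N.post t p - N.pre t p)).sum)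
          = g (k + 1) := by
        funext p
        rw [hlist]
        have h1 : ∑ t ∈ s, (x t / ν) * (N.post t p - N.pre t p) = E p / ν := by
          rw [hE_def]
          simp only
          rw [Finset.sum_div]
          rw [← Finset.sum_subset (Finset.subset_univ s) (f := fun t =>
            (N.post t p - N.pre t p) * x t / ν)]
          · apply Finset.sum_congr rfl
            intro t _
            ring
          · intro t _ ht
            have hxt : x t = 0 := by
              rcases eq_or_lt_of_le (hx t) with h | h
              · exact h.symm
              · exact absurd ((hsmem t).mpr ((hxs t).mp h)) ht
            rw [hxt]; ring
        rw [h1]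
        simp only [hg_def]
        push_cast
        field_simp
        ring
      rwa [hend] at hch
    -- chaining rounds
    have chain : ∀ j k : ℕ, k + j = n →
        N.fireSeq ((List.replicate j ρ)).flatten (g k) (g n) := by
      intro j
      induction j with
      | zero =>
          intro k hk
          have hkn : k = n := by omega
          rw [hkn]
          show N.fireSeq [] (g n) (g n)
          rfl
      | succ j ih =>
          intro k hk
          rw [List.replicate_succ, List.flatten_cons]
          exact fireSeq_append_of (round k (by omega)) (ih (k + 1) (by omega))
    have hg0 : g 0 = m₁ := by funext p; simp [hg_def]
    have hgn : g n = m₂ := by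
      funext p
      have : (n : ℝ) / ν = 1 := by rw [hν_def]; exact div_self hν.ne'
      show m₁ p + (n : ℝ) / ν * E p = m₂ p
      rw [this, heq p]
      simp [hE_def]
    refine ⟨(List.replicate n ρ).flatten, ?_, ?_⟩
    · have := chain n 0 (by omega)
      rwa [hg0, hgn] at this
    · ext t
      simp only [seqSupport, Set.mem_setOf_eq]
      constructor
      · rintro ⟨α, hα⟩
        rw [List.mem_flatten] at hα
        obtain ⟨l, hl, hmem⟩ := hα
        rw [List.mem_replicate] at hl
        rw [hl.2, hρ_def] at hmem
        rcases List.mem_map.mp hmem with ⟨t', ht', heq'⟩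
        have : t' = t := congrArg Prod.snd heq'
        rw [← this]
        exact (hLmem t').mp ht'
      · intro ht
        refine ⟨x t / ν, ?_⟩
        rw [List.mem_flatten]
        refine ⟨ρ, ?_, ?_⟩
        · rw [List.mem_replicate]
          exact ⟨by omega, rfl⟩
        · rw [hρ_def]
          exact List.mem_map.mpr ⟨t, (hLmem t).mpr ht, rfl⟩

end PetriNet

namespace PetriNet

variable {P T : Type*}

/-- From any enabled sequence one can fire a sequence with the same support,
arbitrarily small Parikh vector, reaching a marking that dominates a positive
multiple of the initial marking and of each fired transition's postset. -/
lemma exists_small {N : PetriNet P T} [DecidableEq T] :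
    ∀ (σ : List (ℝ × T)) (m m'' : P → ℝ), (∀ p, 0 ≤ m p) → N.fireSeq σ m m'' →
    ∀ ε : ℝ, 0 < ε →
    ∃ (τ : List (ℝ × T)) (m₁ : P → ℝ) (c : ℝ), 0 < c ∧
      N.fireSeq τ m m₁ ∧ seqSupport τ = seqSupport σ ∧
      (∀ t, ppar τ t ≤ ε) ∧
      (∀ p, c * m p ≤ m₁ p) ∧
      (∀ q ∈ σ, ∀ p, c * N.post q.2 p ≤ m₁ p) := by
  intro σ
  induction σ with
  | nil =>
      intro m m'' hm h ε hε
      refine ⟨[], m, 1, one_pos, rfl, rfl, fun t => ?_, fun p => by linarith [hm p], by simp⟩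
      simp [ppar]; linarith
  | cons a σ ih =>
      obtain ⟨α, t₀⟩ := a
      intro m m'' hm h ε hε
      obtain ⟨m₂, hf, hs⟩ := h
      have hα : 0 < α := hf.1
      have hen : ∀ p, α * N.pre t₀ p ≤ m p := hf.2.1
      have hstep : ∀ p, m₂ p = m p + α * (N.post t₀ p - N.pre t₀ p) := hf.2.2
      have hm₂ : ∀ p, 0 ≤ m₂ p := fire_nonneg hf
      have hm₂post : ∀ p, α * N.post t₀ p ≤ m₂ p := by
        intro p; have := hen p; rw [hstep p]; linarith [mul_le_mul_of_nonneg_left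
          (le_refl (N.post t₀ p)) hα.le]
      obtain ⟨τ', m₁', c', hc', hfs', hsupp', hppar', hb1', hb2'⟩ :=
        ih m₂ m'' hm₂ hs (ε / 2) (half_pos hε)
      set β : ℝ := min (α / 2) (ε / 2) with hβ_def
      have hβ : 0 < β := lt_min (half_pos hα) (half_pos hε)
      have hβα : β ≤ α / 2 := min_le_left _ _
      have hβε : β ≤ ε / 2 := min_le_right _ _
      set lam : ℝ := β / α with hlam_def
      have hlam : 0 < lam := div_pos hβ hα
      have hlamα : lam * α = β := div_mul_cancel₀ β hα.ne'
      have hlam2 : lam ≤ 1 / 2 := by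
        rw [hlam_def, div_le_div_iff₀ hα two_pos]
        linarith
      set m₃ : P → ℝ := fun p => m p + β * (N.post t₀ p - N.pre t₀ p) with hm₃_def
      have hfire : N.fire t₀ β m m₃ := by
        refine ⟨hβ, fun p => ?_, fun p => rfl⟩
        have h1 := hen p
        have h2 := N.pre_nonneg t₀ p
        nlinarith
      have hsc : ∀ p, lam * m₂ p ≤ m₃ p := by
        intro p
        have h1 : lam * m₂ p = lam * m p + β * (N.post t₀ p - N.pre t₀ p) := by
          rw [hstep p]; rw [← hlamα]; ring
        have h2 := hm p
        simp only [hm₃_def]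
        nlinarith
      have hscale := scale_mono hfs' hlam hsc
      set m₁ : P → ℝ := fun p => m₃ p + lam * (m₁' p - m₂ p) with hm₁_def
      have hm₁eq : ∀ p, m₁ p = (1 - lam) * m p + lam * m₁' p := by
        intro p
        simp only [hm₁_def, hm₃_def]
        rw [hstep p, ← hlamα]; ring
      refine ⟨(β, t₀) :: τ'.map (fun q => (lam * q.1, q.2)), m₁,
        min (1 - lam) (min (lam * c') (lam * c' * α)), ?_, ⟨m₃, hfire, hscale⟩, ?_, ?_, ?_, ?_⟩
      · refine lt_min (by linarith) (lt_min (mul_pos hlam hc') ?_)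
        exact mul_pos (mul_pos hlam hc') hα
      · rw [seqSupport_cons, seqSupport_map_scale, hsupp', seqSupport_cons]
      · intro t
        rw [ppar_cons, ppar_map_scale]
        have h1 := hppar' t
        have h2 : 0 ≤ ppar τ' t :=
          ppar_nonneg (fun q hq => (fireSeq_mem_pos hfs' q hq).le) t
        have h3 : lam * ppar τ' t ≤ ppar τ' t := by nlinarith
        split_ifs <;> linarith
      · intro p
        have h1 : lam * (c' * m₂ p) ≤ lam * m₁' p :=
          mul_le_mul_of_nonneg_left (hb1' p) hlam.le
        have h2 := hm p
        have h3 := hm₂ p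
        have h4 : min (1 - lam) (min (lam * c') (lam * c' * α)) ≤ 1 - lam := min_le_left _ _
        rw [hm₁eq p]
        nlinarith [mul_nonneg hlam.le (mul_nonneg hc'.le h3)]
      · rintro q hq p
        rcases List.mem_cons.mp hq with hq | hq
        · -- q = (α, t₀)
          rw [hq]
          have h1 : lam * (c' * m₂ p) ≤ lam * m₁' p :=
            mul_le_mul_of_nonneg_left (hb1' p) hlam.le
          have h2 : c' * (α * N.post t₀ p) ≤ c' * m₂ p :=
            mul_le_mul_of_nonneg_left (hm₂post p) hc'.le
          have h5 := N.post_nonneg t₀ p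
          have h6 := hm p
          have h4 : min (1 - lam) (min (lam * c') (lam * c' * α)) ≤ lam * c' * α :=
            le_trans (min_le_right _ _) (min_le_right _ _)
          rw [hm₁eq p]
          nlinarith [mul_le_mul_of_nonneg_left h2 hlam.le]
        · have h1 : lam * (c' * N.post q.2 p) ≤ lam * m₁' p :=
            mul_le_mul_of_nonneg_left (hb2' q hq p) hlam.le
          have h5 := N.post_nonneg q.2 p
          have h6 := hm p
          have h4 : min (1 - lam) (min (lam * c') (lam * c' * α)) ≤ lam * c' :=
            le_trans (min_le_right _ _) (min_le_left _ _)
          rw [hm₁eq p]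
          nlinarith

/-- Along any firing sequence, the pre and post vectors of every fired transition are
bounded by a multiple of the initial marking plus the Parikh-weighted postsets. -/
lemma cap_bound {N : PetriNet P T} [Fintype T] [DecidableEq T] :
    ∀ (σ : List (ℝ × T)) (m m'' : P → ℝ), (∀ p, 0 ≤ m p) → N.fireSeq σ m m'' →
      ∀ q ∈ σ, ∃ K : ℝ, 0 < K ∧
        ∀ p, N.pre q.2 p + N.post q.2 p ≤ K * (m p + ∑ s, ppar σ s * N.post s p) := by
  intro σ
  induction σ with
  | nil => intro m m'' hm h q hq; simp at hq
  | cons a σ ih =>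
      obtain ⟨α, t₀⟩ := a
      intro m m'' hm h q hq
      obtain ⟨m₂, hf, hs⟩ := h
      have hα : 0 < α := hf.1
      have hen : ∀ p, α * N.pre t₀ p ≤ m p := hf.2.1
      have hstep : ∀ p, m₂ p = m p + α * (N.post t₀ p - N.pre t₀ p) := hf.2.2
      have hm₂ : ∀ p, 0 ≤ m₂ p := fire_nonneg hf
      have hpos : ∀ q' ∈ (α, t₀) :: σ, (0:ℝ) < q'.1 :=
        fireSeq_mem_pos ⟨m₂, hf, hs⟩
      have hpposσ : ∀ t, 0 ≤ ppar σ t :=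
        ppar_nonneg (fun q' hq' => (hpos q' (List.mem_cons_of_mem _ hq')).le)
      have hsum_split : ∀ p, ∑ s, ppar ((α, t₀) :: σ) s * N.post s p
          = α * N.post t₀ p + ∑ s, ppar σ s * N.post s p := by
        intro p
        have : ∀ s, ppar ((α, t₀) :: σ) s * N.post s p
            = (if t₀ = s then α * N.post s p else 0) + ppar σ s * N.post s p := by
          intro s
          rw [ppar_cons]
          by_cases h : t₀ = s
          · have h' : ((α, t₀) : ℝ × T).2 = s := h
            simp only [if_pos h, h', if_pos]
            ring
          · have h' : ¬(((α, t₀) : ℝ × T).2 = s) := h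
            simp only [if_neg h, h', if_neg, not_false_iff, zero_add]
        rw [Finset.sum_congr rfl (fun s _ => this s), Finset.sum_add_distrib,
          Finset.sum_ite_eq Finset.univ t₀ (fun s => α * N.post s p)]
        simp
      have hsumnn : ∀ p, 0 ≤ ∑ s, ppar σ s * N.post s p := by
        intro p
        exact Finset.sum_nonneg fun s _ => mul_nonneg (hpposσ s) (N.post_nonneg s p)
      rcases List.mem_cons.mp hq with hq' | hq'
      · -- q = (α, t₀)
        refine ⟨1 / α, by positivity, fun p => ?_⟩
        rw [hq']
        have h1 : N.pre t₀ p ≤ m p / α := by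
          rw [le_div_iff₀ hα]; linarith [hen p]
        have h2 : α * N.post t₀ p ≤ ∑ s, ppar ((α, t₀) :: σ) s * N.post s p := by
          rw [hsum_split p]; linarith [hsumnn p]
        have h3 : N.post t₀ p ≤ (∑ s, ppar ((α, t₀) :: σ) s * N.post s p) / α := by
          rw [le_div_iff₀ hα]; linarith
        rw [hsum_split p]
        rw [hsum_split p] at h3
        have := hsumnn p
        have hmp := hm p
        rw [le_div_iff₀ hα] at h3
        have h1' : N.pre t₀ p * α ≤ m p := by
          rw [le_div_iff₀ hα] at h1; exact h1
        rw [div_mul_eq_mul_div, le_div_iff₀ hα, one_mul]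
        nlinarith
      · obtain ⟨K, hK, hKb⟩ := ih m₂ m'' hm₂ hs q hq'
        refine ⟨K, hK, fun p => ?_⟩
        have hmono : m₂ p + ∑ s, ppar σ s * N.post s p
            ≤ m p + ∑ s, ppar ((α, t₀) :: σ) s * N.post s p := by
          rw [hsum_split p, hstep p]
          have := hen p
          nlinarith [N.post_nonneg t₀ p, mul_nonneg hα.le (N.pre_nonneg t₀ p)]
        exact le_trans (hKb p) (mul_le_mul_of_nonneg_left hmono hK.le)

/-- Combine finitely many positive bounding constants into a single one. -/
lemma exists_uniform [Fintype T] (s : Finset T) (f : T → P → ℝ) (m₁ m₂ : P → ℝ)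
    (hf : ∀ t p, 0 ≤ f t p)
    (h : ∀ t ∈ s, ∃ c : ℝ, 0 < c ∧ ∀ p, c * f t p ≤ m₁ p ∧ c * f t p ≤ m₂ p) :
    ∃ c : ℝ, 0 < c ∧ ∀ t ∈ s, ∀ p, c * f t p ≤ m₁ p ∧ c * f t p ≤ m₂ p := by
  classical
  induction s using Finset.induction_on with
  | empty => exact ⟨1, one_pos, by simp⟩
  | @insert a s ha ih =>
      obtain ⟨ca, hca, hba⟩ := h a (Finset.mem_insert_self a s)
      obtain ⟨cs, hcs, hbs⟩ := ih (fun t ht => h t (Finset.mem_insert_of_mem ht))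
      refine ⟨min ca cs, lt_min hca hcs, fun t ht p => ?_⟩
      rcases Finset.mem_insert.mp ht with rfl | ht
      · have h1 := hba p
        have h2 : min ca cs * f t p ≤ ca * f t p :=
          mul_le_mul_of_nonneg_right (min_le_left _ _) (hf t p)
        exact ⟨le_trans h2 h1.1, le_trans h2 h1.2⟩
      · have h1 := hbs t ht p
        have h2 : min ca cs * f t p ≤ cs * f t p :=
          mul_le_mul_of_nonneg_right (min_le_right _ _) (hf t p)
        exact ⟨le_trans h2 h1.1, le_trans h2 h1.2⟩

end PetriNet

namespace PetriNet

variable {P T : Type*}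

lemma cap_le {N : PetriNet P T} [Fintype T] [DecidableEq T]
    (σ : List (ℝ × T)) (m0 m₁ : P → ℝ) (c₁ : ℝ) (hc₁ : 0 < c₁)
    (hm₁ : ∀ p, 0 ≤ m₁ p)
    (hbm : ∀ p, c₁ * m0 p ≤ m₁ p)
    (hbpost : ∀ q ∈ σ, ∀ p, c₁ * N.post q.2 p ≤ m₁ p)
    (hpp : ∀ t, 0 ≤ ppar σ t) :
    ∀ p, m0 p + ∑ s, ppar σ s * N.post s p ≤ ((1 + ∑ s, ppar σ s) / c₁) * m₁ p := by
  intro p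
  have h0 : m0 p ≤ m₁ p / c₁ := by
    rw [le_div_iff₀ hc₁]; linarith [hbm p, mul_comm c₁ (m0 p)]
  have hterm : ∀ s, ppar σ s * N.post s p ≤ ppar σ s * (m₁ p / c₁) := by
    intro s
    rcases eq_or_lt_of_le (hpp s) with h | h
    · rw [← h]; simp
    · have hs : s ∈ seqSupport σ := ppar_mem_support h.ne'
      obtain ⟨α, hα⟩ := hs
      have := hbpost (α, s) hα p
      have hpost : N.post s p ≤ m₁ p / c₁ := by
        rw [le_div_iff₀ hc₁]; linarith [mul_comm c₁ (N.post s p)]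
      exact mul_le_mul_of_nonneg_left hpost h.le
  calc m0 p + ∑ s, ppar σ s * N.post s p
      ≤ m₁ p / c₁ + ∑ s, ppar σ s * (m₁ p / c₁) :=
        add_le_add h0 (Finset.sum_le_sum fun s _ => hterm s)
    _ = ((1 + ∑ s, ppar σ s) / c₁) * m₁ p := by
        rw [← Finset.sum_mul]
        field_simp

end PetriNet


/-- Fraca–Haddad characterization of `U`-reachability in continuous Petri nets. -/
theorem reachSupp_iff
    {P T : Type*} [Fintype T]
    (N : PetriNet P T) (U : Set T) (msrc mtgt : P → ℝ)
    (hsrc : 0 ≤ msrc) (htgt : 0 ≤ mtgt) :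
    N.reachSupp U msrc mtgt ↔
      ((∃ x : T → ℝ, 0 ≤ x ∧ {t : T | 0 < x t} = U ∧
          ∀ p, msrc p + ∑ t : T, (N.post t p - N.pre t p) * x t = mtgt p) ∧
        (∃ σ : List (ℝ × T), seqSupport σ = U ∧ N.enabledSeq σ msrc) ∧
        (∃ σ : List (ℝ × T), seqSupport σ = U ∧ N.backwardEnabledSeq σ mtgt)) := by
  classical
  have hsrc' : ∀ p, 0 ≤ msrc p := fun p => hsrc p
  have htgt' : ∀ p, 0 ≤ mtgt p := fun p => htgt p
  constructor
  · rintro ⟨σ, hf, hsupp⟩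
    refine ⟨⟨ppar σ, ?_, ?_, ?_⟩, ⟨σ, hsupp, mtgt, hf⟩, ⟨σ, hsupp, msrc, fireSeq_reverse hf⟩⟩
    · intro t
      exact ppar_nonneg (fun q hq => (fireSeq_mem_pos hf q hq).le) t
    · rw [← hsupp]
      ext t
      simp only [Set.mem_setOf_eq]
      exact ⟨fun h => ppar_mem_support h.ne', fun h => ppar_pos (fireSeq_mem_pos hf) h⟩
    · intro p
      have := fireSeq_stateEq hf p
      linarith
  · rintro ⟨⟨x, hx, hxs, heq⟩, ⟨σs, hss, m_f, hfs⟩, ⟨σt, hts, m_b, hft⟩⟩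
    have hx' : ∀ t, 0 ≤ x t := fun t => hx t
    have hxs' : ∀ t, 0 < x t ↔ t ∈ U := fun t => by rw [← hxs]; rfl
    by_cases hUe : U = ∅
    · refine ⟨[], ?_, by simp [hUe]⟩
      show msrc = mtgt
      funext p
      have h0 : ∀ t, x t = 0 := by
        intro t
        rcases eq_or_lt_of_le (hx' t) with h | h
        · exact h.symm
        · exact absurd ((hxs' t).mp h) (by simp [hUe])
      have := heq p
      simp [h0] at this
      linarith
    · have hUne : U.Nonempty := Set.nonempty_iff_ne_empty.mpr hUe
      set s : Finset T := Finset.univ.filter (· ∈ U) with hs_def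
      have hsmem : ∀ t, t ∈ s ↔ t ∈ U := fun t => by simp [hs_def]
      have hsne : s.Nonempty := by
        obtain ⟨t, ht⟩ := hUne
        exact ⟨t, (hsmem t).mpr ht⟩
      set ε : ℝ := (s.inf' hsne x) / 4 with hε_def
      have hεpos : 0 < ε := by
        rw [hε_def]
        have : 0 < s.inf' hsne x := by
          rw [Finset.lt_inf'_iff]
          intro b hb
          exact (hxs' b).mpr ((hsmem b).mp hb)
        linarith
      have hεle : ∀ t ∈ U, 4 * ε ≤ x t := by
        intro t ht
        rw [hε_def]
        have := Finset.inf'_le x ((hsmem t).mpr ht)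
        linarith
      -- small forward witness from msrc
      obtain ⟨τ₁, m₁, c₁, hc₁, hfs₁, hsupp₁, hppar₁, hb₁m, hb₁post⟩ :=
        exists_small σs msrc m_f hsrc' hfs ε hεpos
      rw [hss] at hsupp₁
      -- small backward witness from mtgt (in the transpose net)
      obtain ⟨τ₂, m₂, c₂, hc₂, hfs₂, hsupp₂, hppar₂, hb₂m, hb₂post⟩ :=
        exists_small (N := N.transpose) σt.reverse mtgt m_b htgt' hft ε hεpos
      rw [seqSupport_reverse, hts] at hsupp₂
      have hm₁ : ∀ p, 0 ≤ m₁ p := fireSeq_nonneg hsrc' hfs₁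
      have hm₂ : ∀ p, 0 ≤ m₂ p := fireSeq_nonneg htgt' hfs₂
      have hy : ∀ t, 0 ≤ ppar τ₁ t :=
        fun t => ppar_nonneg (fun q hq => (fireSeq_mem_pos hfs₁ q hq).le) t
      have hz : ∀ t, 0 ≤ ppar τ₂ t :=
        fun t => ppar_nonneg (fun q hq => (fireSeq_mem_pos hfs₂ q hq).le) t
      set x' : T → ℝ := fun t => x t - ppar τ₁ t - ppar τ₂ t with hx'_def
      have hx'U : ∀ t, 0 < x' t ↔ t ∈ U := by
        intro t
        constructor
        · intro h
          by_contra hc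
          have h1 : x t = 0 := by
            rcases eq_or_lt_of_le (hx' t) with h' | h'
            · exact h'.symm
            · exact absurd ((hxs' t).mp h') hc
          have h2 : ppar τ₁ t = 0 := ppar_eq_zero (by rw [hsupp₁]; exact hc)
          have h3 : ppar τ₂ t = 0 := ppar_eq_zero (by rw [hsupp₂]; exact hc)
          rw [hx'_def] at h
          simp only at h
          rw [h1, h2, h3] at h
          linarith
        · intro ht
          have h1 := hεle t ht
          have h2 := hppar₁ t
          have h3 := hppar₂ t
          rw [hx'_def]
          simp only
          linarith
      have hx'0 : ∀ t, 0 ≤ x' t := by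
        intro t
        by_cases ht : t ∈ U
        · exact ((hx'U t).mpr ht).le
        · have h1 : x t = 0 := by
            rcases eq_or_lt_of_le (hx' t) with h' | h'
            · exact h'.symm
            · exact absurd ((hxs' t).mp h') ht
          have h2 : ppar τ₁ t = 0 := ppar_eq_zero (by rw [hsupp₁]; exact ht)
          have h3 : ppar τ₂ t = 0 := ppar_eq_zero (by rw [hsupp₂]; exact ht)
          rw [hx'_def]; simp only; rw [h1, h2, h3]; norm_num
      -- state equations
      have e₁ : ∀ p, m₁ p = msrc p + ∑ t, (N.post t p - N.pre t p) * ppar τ₁ t :=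
        fireSeq_stateEq hfs₁
      have e₂ : ∀ p, m₂ p = mtgt p + ∑ t, (N.pre t p - N.post t p) * ppar τ₂ t := by
        intro p
        have := fireSeq_stateEq hfs₂ p
        rw [this]
        rfl
      have hmid : ∀ p, m₂ p = m₁ p + ∑ t, (N.post t p - N.pre t p) * x' t := by
        intro p
        have hsplit : ∑ t, (N.post t p - N.pre t p) * x' t
            = (∑ t, (N.post t p - N.pre t p) * x t)
              - (∑ t, (N.post t p - N.pre t p) * ppar τ₁ t)
              + (∑ t, (N.pre t p - N.post t p) * ppar τ₂ t) := by
          rw [← Finset.sum_sub_distrib, ← Finset.sum_add_distrib]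
          apply Finset.sum_congr rfl
          intro t _
          rw [hx'_def]
          simp only
          ring
        rw [hsplit, e₂ p, e₁ p, ← heq p]
        ring
      -- bounds: for every t ∈ U, pre t + post t is dominated by both m₁ and m₂
      have hbounds : ∃ c : ℝ, 0 < c ∧ ∀ t ∈ s, ∀ p,
          c * (N.pre t p + N.post t p) ≤ m₁ p ∧ c * (N.pre t p + N.post t p) ≤ m₂ p := by
        apply exists_uniform s _ m₁ m₂
          (fun t p => add_nonneg (N.pre_nonneg t p) (N.post_nonneg t p))
        intro t ht
        have htU : t ∈ U := (hsmem t).mp ht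
        -- bound against m₁, via the forward witness σs
        obtain ⟨αs, hαs⟩ : ∃ α : ℝ, (α, t) ∈ σs := by rw [← hss] at htU; exact htU
        obtain ⟨K₁, hK₁, hK₁b⟩ := cap_bound σs msrc m_f hsrc' hfs (αs, t) hαs
        have hppσs : ∀ u, 0 ≤ ppar σs u :=
          fun u => ppar_nonneg (fun q hq => (fireSeq_mem_pos hfs q hq).le) u
        have hb1post' : ∀ q ∈ σs, ∀ p, c₁ * N.post q.2 p ≤ m₁ p := by
          intro q hq p
          exact hb₁post q hq p
        have hcap₁ := cap_le σs msrc m₁ c₁ hc₁ hm₁ hb₁m hb1post' hppσs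
        set C₁ : ℝ := K₁ * ((1 + ∑ u, ppar σs u) / c₁) with hC₁_def
        have hC₁pos : 0 < C₁ := by
          rw [hC₁_def]
          apply mul_pos hK₁
          apply div_pos _ hc₁
          have : 0 ≤ ∑ u, ppar σs u := Finset.sum_nonneg fun u _ => hppσs u
          linarith
        have hbnd₁ : ∀ p, N.pre t p + N.post t p ≤ C₁ * m₁ p := by
          intro p
          calc N.pre t p + N.post t p
              ≤ K₁ * (msrc p + ∑ u, ppar σs u * N.post u p) := hK₁b p
            _ ≤ K₁ * (((1 + ∑ u, ppar σs u) / c₁) * m₁ p) :=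
                mul_le_mul_of_nonneg_left (hcap₁ p) hK₁.le
            _ = C₁ * m₁ p := by rw [hC₁_def]; ring
        -- bound against m₂, via the backward witness σt.reverse in the transpose net
        obtain ⟨αt, hαt⟩ : ∃ α : ℝ, (α, t) ∈ σt.reverse := by
          have : t ∈ seqSupport σt.reverse := by rw [seqSupport_reverse, hts]; exact htU
          exact this
        obtain ⟨K₂, hK₂, hK₂b⟩ :=
          cap_bound (N := N.transpose) σt.reverse mtgt m_b htgt' hft (αt, t) hαt
        have hppσt : ∀ u, 0 ≤ ppar σt.reverse u :=
          fun u => ppar_nonneg (fun q hq => (fireSeq_mem_pos hft q hq).le) u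
        have hcap₂ := cap_le (N := N.transpose) σt.reverse mtgt m₂ c₂ hc₂ hm₂ hb₂m hb₂post hppσt
        set C₂ : ℝ := K₂ * ((1 + ∑ u, ppar σt.reverse u) / c₂) with hC₂_def
        have hC₂pos : 0 < C₂ := by
          rw [hC₂_def]
          apply mul_pos hK₂
          apply div_pos _ hc₂
          have : 0 ≤ ∑ u, ppar σt.reverse u := Finset.sum_nonneg fun u _ => hppσt u
          linarith
        have hbnd₂ : ∀ p, N.pre t p + N.post t p ≤ C₂ * m₂ p := by
          intro p
          have h1 : N.transpose.pre t p + N.transpose.post t p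
              ≤ K₂ * (mtgt p + ∑ u, ppar σt.reverse u * N.transpose.post u p) := hK₂b p
          have h2 : N.transpose.pre t p + N.transpose.post t p = N.pre t p + N.post t p := by
            rw [transpose_pre, transpose_post]; ring
          calc N.pre t p + N.post t p
              = N.transpose.pre t p + N.transpose.post t p := h2.symm
            _ ≤ K₂ * (mtgt p + ∑ u, ppar σt.reverse u * N.transpose.post u p) := h1
            _ ≤ K₂ * (((1 + ∑ u, ppar σt.reverse u) / c₂) * m₂ p) :=
                mul_le_mul_of_nonneg_left (hcap₂ p) hK₂.le
            _ = C₂ * m₂ p := by rw [hC₂_def]; ring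
        refine ⟨min (1 / C₁) (1 / C₂), lt_min (by positivity) (by positivity), fun p => ?_⟩
        have hnn : 0 ≤ N.pre t p + N.post t p :=
          add_nonneg (N.pre_nonneg t p) (N.post_nonneg t p)
        constructor
        · have h1 : min (1 / C₁) (1 / C₂) * (N.pre t p + N.post t p)
              ≤ (1 / C₁) * (N.pre t p + N.post t p) :=
            mul_le_mul_of_nonneg_right (min_le_left _ _) hnn
          have h2 : (1 / C₁) * (N.pre t p + N.post t p) ≤ m₁ p := by
            rw [div_mul_eq_mul_div, div_le_iff₀ hC₁pos, one_mul]
            linarith [hbnd₁ p, mul_comm C₁ (m₁ p)]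
          linarith
        · have h1 : min (1 / C₁) (1 / C₂) * (N.pre t p + N.post t p)
              ≤ (1 / C₂) * (N.pre t p + N.post t p) :=
            mul_le_mul_of_nonneg_right (min_le_right _ _) hnn
          have h2 : (1 / C₂) * (N.pre t p + N.post t p) ≤ m₂ p := by
            rw [div_mul_eq_mul_div, div_le_iff₀ hC₂pos, one_mul]
            linarith [hbnd₂ p, mul_comm C₂ (m₂ p)]
          linarith
      obtain ⟨c, hc, hcb⟩ := hbounds
      -- apply the core lemma
      obtain ⟨σmid, hmidfs, hmidsupp⟩ :=
        N.core U x' m₁ m₂ hx'0 hx'U hm₁ hm₂ hmid c hc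
          (fun t ht p => (hcb t ((hsmem t).mpr ht) p).1)
          (fun t ht p => (hcb t ((hsmem t).mpr ht) p).2)
      -- final composition
      have hback : N.fireSeq τ₂.reverse m₂ mtgt := by
        have := fireSeq_reverse (N := N.transpose) hfs₂
        rwa [transpose_transpose] at this
      refine ⟨τ₁ ++ (σmid ++ τ₂.reverse), ?_, ?_⟩
      · exact fireSeq_append_of hfs₁ (fireSeq_append_of hmidfs hback)
      · rw [seqSupport_append, seqSupport_append, seqSupport_reverse,
          hsupp₁, hmidsupp, hsupp₂]
        simp
end

section
/- Let N = (P,T,F) be a continuous Petri net, let R ⊆ P be a trap of N, and let m, m' ∈ (ℝ≥0)^P be markings with m →(αt) m' for some transition t and real α > 0. If m(R) > 0 then m'(R) > 0 (marked traps remain marked). -/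
open PetriNet

/-- Marked traps remain marked: if `R` is a trap of `N` (i.e. `R• ⊆ •R`),
`m →(αt) m'` and `m(R) > 0`, then `m'(R) > 0`. -/
theorem trap_marked_stays_marked
    {P T : Type*}
    (N : PetriNet P T) (R : Finset P)
    (htrap : {t : T | ∃ p ∈ R, 0 < N.Fminus p t} ⊆ {t : T | ∃ p ∈ R, 0 < N.Fplus p t})
    (t : T) (α : ℝ) (m m' : P → ℝ) (hm : 0 ≤ m) (hm' : 0 ≤ m')
    (hfire : N.fire t α m m')
    (h0 : 0 < ∑ p ∈ R, m p) :
    0 < ∑ p ∈ R, m' p := by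
  obtain ⟨hα, hpre, hstep⟩ := hfire
  by_cases hcase : ∃ p ∈ R, 0 < N.Fminus p t
  · obtain ⟨q, hqR, hq⟩ := htrap hcase
    have hq' : (0:ℝ) < α * N.post t q := by
      apply mul_pos hα
      simp [PetriNet.post]
      exact hq
    have hmq : 0 < m' q := by
      have := hpre q
      have h := hstep q
      nlinarith [this, h]
    calc (0:ℝ) < m' q := hmq
      _ ≤ ∑ p ∈ R, m' p := Finset.single_le_sum (fun p _ => hm' p) hqR
  · push_neg at hcase
    have : ∀ p ∈ R, m p ≤ m' p := by
      intro p hp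
      have hz : N.Fminus p t = 0 := Nat.le_zero.mp (hcase p hp)
      have : (0:ℝ) ≤ α * N.post t p := by
        apply mul_nonneg hα.le
        simp [PetriNet.post]
      rw [hstep p, PetriNet.pre, hz]
      push_cast
      linarith
    calc (0:ℝ) < ∑ p ∈ R, m p := h0
      _ ≤ ∑ p ∈ R, m' p := Finset.sum_le_sum this
end

section
/- Let A ∈ ℝ^{m×n}, b ∈ ℝ^m, and U ⊆ V ⊆ {1,…,n}. The system ∃x ≥ 0 : A·x = b ∧ U ⊆ supp(x) ⊆ V has no solution if and only if the following system has a solution: ∃y ∈ ℝ^m : (Aᵀy)(t) ≥ 0 for all t ∈ V, and bᵀy ≤ 0, and bᵀy < Σ_{t∈U} (Aᵀy)(t). -/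
/-!
Homogenize: if `x ≥ 0` is supported in `V`, `τ ≥ 0` and `A x = (b - A 1_U) + τ b`, then
`(x + 1_U) / (1 + τ)` solves the support-constrained system. Farkas' lemma for the cone spanned by
the columns of `A` indexed by `V` together with `-b` turns the infeasibility of this homogenized
system into exactly the certificate `y`. Farkas' lemma itself is proved by induction on the
generators (Bartl): a certificate `y` for the old generators that is negative on the new generator
`u` is repaired by projecting everything onto `ker y` along `u` and using the induction hypothesis
there. Conversely, a certificate rules out solutions by complementary slackness:
`x ⬝ᵥ Aᵀy = b ⬝ᵥ y ≤ 0` is a sum of nonnegative terms, so `Aᵀy` vanishes on `supp x ⊇ U`.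
-/

open Matrix

namespace Module.Dual

variable {𝕜 M : Type*} [Field 𝕜] [AddCommGroup M] [Module 𝕜 M] {y : Module.Dual 𝕜 M} {u : M}

/-- The projection onto `ker y` along `u`, provided `y u ≠ 0`. -/
def projAlong (y : Module.Dual 𝕜 M) (u : M) : M →ₗ[𝕜] M :=
  LinearMap.id - (y u)⁻¹ • y.smulRight u

lemma projAlong_apply (v : M) : y.projAlong u v = v - ((y u)⁻¹ * y v) • u := by
  simp [projAlong, mul_smul]

lemma projAlong_self (hu : y u ≠ 0) : y.projAlong u u = 0 := by
  simp [projAlong_apply, inv_mul_cancel₀ hu]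

lemma eq_smul_of_projAlong_eq_zero {v : M} (hv : y.projAlong u v = 0) :
    v = ((y u)⁻¹ * y v) • u :=
  sub_eq_zero.mp <| (projAlong_apply v).symm.trans hv

end Module.Dual

section Farkas

variable {𝕜 M ι : Type*} [Field 𝕜] [LinearOrder 𝕜] [IsStrictOrderedRing 𝕜]
  [AddCommGroup M] [Module 𝕜 M]

lemma exists_nonneg_sum_insert_eq_of_projAlong [DecidableEq ι] {s : Finset ι} {j : ι}
    (hj : j ∉ s) {a : ι → M} {b : M} {y : Module.Dual 𝕜 M} (hy : ∀ i ∈ s, 0 ≤ y (a i))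
    (hyb : y b < 0) (hyj : y (a j) < 0) {x : ι → 𝕜} (hx : 0 ≤ x) (hxs : ∀ i ∉ s, x i = 0)
    (hxb : ∑ i ∈ s, x i • y.projAlong (a j) (a i) = y.projAlong (a j) b) :
    ∃ x' : ι → 𝕜, 0 ≤ x' ∧ (∀ i ∉ insert j s, x' i = 0) ∧ ∑ i ∈ insert j s, x' i • a i = b := by
  set μ := (y (a j))⁻¹ * y (b - ∑ i ∈ s, x i • a i)
  have hres : b - ∑ i ∈ s, x i • a i = μ • a j :=
    Module.Dual.eq_smul_of_projAlong_eq_zero <| by simp [map_sum, hxb]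
  have hμ : 0 ≤ μ := by
    refine mul_nonneg_of_nonpos_of_nonpos (inv_nonpos.mpr hyj.le) ?_
    have : 0 ≤ ∑ i ∈ s, x i * y (a i) := Finset.sum_nonneg fun i hi => mul_nonneg (hx i) (hy i hi)
    simp only [map_sub, map_sum, map_smul, smul_eq_mul]
    linarith
  refine ⟨Function.update x j μ, fun i => ?_, fun i hi => ?_, ?_⟩
  · rcases eq_or_ne i j with rfl | hij
    · simpa using hμ
    · simpa [hij] using hx i
  · rw [Finset.mem_insert, not_or] at hi
    simp [hi.1, hxs i hi.2]
  · rw [Finset.sum_insert hj, Function.update_self,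
      Finset.sum_congr rfl fun i hi => by rw [Function.update_of_ne (ne_of_mem_of_not_mem hi hj)],
      ← hres, sub_add_cancel]

theorem Finset.farkas_alternative (s : Finset ι) (a : ι → M) (b : M) :
    (∃ x : ι → 𝕜, 0 ≤ x ∧ (∀ i ∉ s, x i = 0) ∧ ∑ i ∈ s, x i • a i = b) ∨
      ∃ y : Module.Dual 𝕜 M, (∀ i ∈ s, 0 ≤ y (a i)) ∧ y b < 0 := by
  classical
  induction s using Finset.induction_on generalizing a b with
  | empty =>
    by_cases hb : b = 0
    · exact .inl ⟨0, le_rfl, fun _ _ => rfl, by simp [hb]⟩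
    · obtain ⟨f, hf⟩ := Module.Projective.exists_dual_eq_one 𝕜 hb
      exact .inr ⟨-f, by simp, by simp [hf]⟩
  | @insert j s hj ih =>
    obtain ⟨x, hx, hxs, hxb⟩ | ⟨y, hy, hyb⟩ := ih a b
    · refine .inl ⟨x, hx, fun i hi => hxs i (hi ∘ Finset.mem_insert_of_mem), ?_⟩
      rw [Finset.sum_insert hj, hxs j hj, zero_smul, zero_add, hxb]
    obtain hyj | hyj := le_or_gt 0 (y (a j))
    · exact .inr ⟨y, Finset.forall_mem_insert _ _ _ |>.mpr ⟨hyj, hy⟩, hyb⟩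
    set π := y.projAlong (a j)
    obtain ⟨x, hx, hxs, hxb⟩ | ⟨w, hw, hwb⟩ := ih (π ∘ a) (π b)
    · exact .inl (exists_nonneg_sum_insert_eq_of_projAlong hj hy hyb hyj hx hxs hxb)
    · refine .inr ⟨w ∘ₗ π, Finset.forall_mem_insert _ _ _ |>.mpr ⟨?_, hw⟩, hwb⟩
      simp [π, Module.Dual.projAlong_self hyj.ne]

theorem Finset.farkas_alternative_add_smul (s : Finset ι) (a : ι → M) (b c : M) :
    (∃ x : ι → 𝕜, ∃ τ : 𝕜, 0 ≤ x ∧ (∀ i ∉ s, x i = 0) ∧ 0 ≤ τ ∧ ∑ i ∈ s, x i • a i = c + τ • b) ∨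
      ∃ y : Module.Dual 𝕜 M, (∀ i ∈ s, 0 ≤ y (a i)) ∧ y b ≤ 0 ∧ y c < 0 := by
  obtain ⟨x, hx, hxs, hxc⟩ | ⟨y, hy, hyc⟩ :=
    (Finset.insertNone s).farkas_alternative (𝕜 := 𝕜) (fun o => o.elim (-b) a) c
  · refine .inl ⟨x ∘ some, x none, fun i => hx _, fun i hi => hxs _ (by simpa using hi),
      hx none, ?_⟩
    rw [← hxc, Finset.sum_insertNone]
    simp
  · simp only [Finset.forall_mem_insertNone, Option.elim, map_neg, neg_nonneg] at hy
    exact .inr ⟨y, hy.2, hy.1, hyc⟩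

end Farkas

namespace Matrix

variable {m n : Type*} [Fintype n]

lemma mulVec_eq_sum_smul_of_support_subset {R : Type*} [CommSemiring R] (A : Matrix m n R)
    {x : n → R} {s : Finset n} (hxs : ∀ i ∉ s, x i = 0) : A *ᵥ x = ∑ i ∈ s, x i • Aᵀ i := by
  rw [mulVec_eq_sum, Finset.sum_subset (Finset.subset_univ s) fun i _ hi => by simp [hxs i hi]]
  simp

lemma indicator_one_dotProduct {R : Type*} [CommSemiring R] (U : Finset n) (v : n → R) :
    (U : Set n).indicator 1 ⬝ᵥ v = ∑ t ∈ U, v t := by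
  classical
  rw [dotProduct_comm]
  simp [dotProduct, Set.indicator_apply]

variable {𝕜 : Type*} [Field 𝕜] [LinearOrder 𝕜] [IsStrictOrderedRing 𝕜]

lemma dotProduct_nonneg_of_pos_imp {x g : n → 𝕜} (hx : 0 ≤ x) (hg : ∀ t, 0 < x t → 0 ≤ g t) :
    0 ≤ x ⬝ᵥ g :=
  Finset.sum_nonneg fun t _ => mul_nonneg_iff_pos_imp_nonneg.mpr ⟨hg t, fun _ => hx t⟩

lemma eq_zero_of_dotProduct_eq_zero_of_pos {x g : n → 𝕜} (hx : 0 ≤ x)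
    (hg : ∀ t, 0 < x t → 0 ≤ g t) (hxg : x ⬝ᵥ g = 0) {t : n} (ht : 0 < x t) : g t = 0 := by
  have hterm := (Finset.sum_eq_zero_iff_of_nonneg fun t _ =>
    mul_nonneg_iff_pos_imp_nonneg.mpr ⟨hg t, fun _ => hx t⟩).mp hxg
  exact (mul_eq_zero.mp (hterm t (Finset.mem_univ t))).resolve_left ht.ne'

theorem farkas_alternative_add_smul [Fintype m] [DecidableEq m] (A : Matrix m n 𝕜)
    (b c : m → 𝕜) (s : Finset n) :
    (∃ x : n → 𝕜, ∃ τ : 𝕜, 0 ≤ x ∧ (∀ i ∉ s, x i = 0) ∧ 0 ≤ τ ∧ A *ᵥ x = c + τ • b) ∨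
      ∃ y : m → 𝕜, (∀ i ∈ s, 0 ≤ (Aᵀ *ᵥ y) i) ∧ b ⬝ᵥ y ≤ 0 ∧ c ⬝ᵥ y < 0 := by
  obtain ⟨x, τ, hx, hxs, hτ, hxc⟩ | ⟨y, hy, hyb, hyc⟩ :=
    s.farkas_alternative_add_smul (𝕜 := 𝕜) Aᵀ b c
  · exact .inl ⟨x, τ, hx, hxs, hτ, by rwa [A.mulVec_eq_sum_smul_of_support_subset hxs]⟩
  · set y' := (dotProductEquiv 𝕜 m).symm y
    have hy' (v : m → 𝕜) : y v = v ⬝ᵥ y' := by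
      rw [dotProduct_comm, ← dotProductEquiv_apply_apply, LinearEquiv.apply_symm_apply]
    exact .inr ⟨y', fun i hi => (hy' (Aᵀ i) ▸ hy i hi :), hy' b ▸ hyb, hy' c ▸ hyc⟩

lemma exists_support_between_of_mulVec_eq_add_smul {A : Matrix m n 𝕜} {b : m → 𝕜}
    {U V : Finset n} (hUV : U ⊆ V) {x : n → 𝕜} {τ : 𝕜} (hx : 0 ≤ x) (hxV : ∀ t ∉ V, x t = 0)
    (hτ : 0 ≤ τ) (hxb : A *ᵥ x = b - A *ᵥ (U : Set n).indicator 1 + τ • b) :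
    ∃ z : n → 𝕜, 0 ≤ z ∧ A *ᵥ z = b ∧ (U : Set n) ⊆ {i | 0 < z i} ∧ {i | 0 < z i} ⊆ V := by
  set e : n → 𝕜 := (U : Set n).indicator 1
  refine ⟨(1 + τ)⁻¹ • (x + e), ?_, ?_, fun t ht => ?_, fun t ht => ?_⟩
  · exact smul_nonneg (by positivity) (add_nonneg hx (Set.indicator_nonneg (by simp)))
  · have hμ : b - A *ᵥ e + τ • b + A *ᵥ e = (1 + τ) • b := by module
    rw [mulVec_smul, mulVec_add, hxb, hμ, smul_smul, inv_mul_cancel₀ (by positivity), one_smul]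
  · simp only [Set.mem_ofPred_eq, Pi.smul_apply, Pi.add_apply, smul_eq_mul, e,
      Set.indicator_of_mem ht, Pi.one_apply]
    exact mul_pos (by positivity) (add_pos_of_nonneg_of_pos (hx t) one_pos)
  · by_contra htV
    have htU : t ∉ (U : Set n) := fun htU => htV (hUV htU)
    simp [e, Set.indicator_of_notMem htU, hxV t htV] at ht

end Matrix

/-- Farkas-style lemma with support constraints: `∃ x ≥ 0, A x = b ∧ U ⊆ supp(x) ⊆ V`
has no solution iff `∃ y, Aᵀy ≥_V 0 ∧ bᵀy ≤ 0 ∧ bᵀy < ∑_{t ∈ U} (Aᵀy)(t)` has one. -/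
theorem farkas_supp
    {m n : ℕ} (A : Matrix (Fin m) (Fin n) ℝ) (b : Fin m → ℝ)
    (U V : Finset (Fin n)) (hUV : U ⊆ V) :
    (¬ ∃ x : Fin n → ℝ, 0 ≤ x ∧ A.mulVec x = b ∧
        (↑U : Set (Fin n)) ⊆ {i | 0 < x i} ∧ {i | 0 < x i} ⊆ ↑V) ↔
      ∃ y : Fin m → ℝ, (∀ t ∈ V, 0 ≤ A.transpose.mulVec y t) ∧
        b ⬝ᵥ y ≤ 0 ∧ b ⬝ᵥ y < ∑ t ∈ U, A.transpose.mulVec y t := by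
  constructor
  · intro hinfeasible
    obtain ⟨x, τ, hx, hxV, hτ, hxb⟩ | ⟨y, hyV, hyb, hyU⟩ :=
      A.farkas_alternative_add_smul b (b - A *ᵥ (U : Set (Fin n)).indicator 1) V
    · exact absurd (exists_support_between_of_mulVec_eq_add_smul hUV hx hxV hτ hxb) hinfeasible
    · refine ⟨y, hyV, hyb, ?_⟩
      rw [sub_dotProduct, dotProduct_comm (A *ᵥ _), ← dotProduct_transpose_mulVec,
        indicator_one_dotProduct] at hyU
      linarith
  · rintro ⟨y, hyV, hyb, hyU⟩ ⟨x, hx, rfl, hUx, hxV⟩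
    have hg (t : Fin n) (ht : 0 < x t) : 0 ≤ (Aᵀ *ᵥ y) t := hyV t (hxV ht)
    have hxg : (A *ᵥ x) ⬝ᵥ y = x ⬝ᵥ (Aᵀ *ᵥ y) := by
      rw [dotProduct_comm, dotProduct_transpose_mulVec]
    have hzero : x ⬝ᵥ (Aᵀ *ᵥ y) = 0 :=
      le_antisymm (hxg ▸ hyb) (dotProduct_nonneg_of_pos_imp hx hg)
    rw [hxg, hzero, Finset.sum_eq_zero fun t ht =>
      eq_zero_of_dotProduct_eq_zero_of_pos hx hg hzero (hUx ht)] at hyU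
    exact hyU.false
end

section
/- Let N = (P,T,F) be a continuous Petri net, let m_src, m_tgt ∈ (ℝ≥0)^P, and let S ⊆ S' ⊆ T. If no vector x ∈ (ℝ≥0)^T satisfies S ⊆ supp(x) ⊆ S' and m_src + F·x = m_tgt, then there exists a linear exclusion function for (S,S') (relative to m_src and m_tgt), i.e., a vector y ∈ ℝ^P such that f(m) := yᵀm is an exclusion function for (S,S'). -/
namespace PetriNet

variable {P T : Type*}

/-- `f` is an exclusion function for `(S, S')` relative to `msrc` and `mtgt`. -/
def IsExclusionFun (N : PetriNet P T) (S S' : Set T) (msrc mtgt : P → ℝ)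
    (f : (P → ℝ) → ℝ) : Prop :=
  (∀ t ∈ S', ∀ (α : ℝ) (m m' : P → ℝ), N.fire t α m m' → f m ≤ f m') ∧
  (f mtgt < f msrc ∨
    (f msrc = f mtgt ∧
      ∃ t ∈ S, ∀ (α : ℝ) (m m' : P → ℝ), N.fire t α m m' → f m < f m'))

end PetriNet

/-!
Put `v t := post t - pre t` and `b := mtgt - msrc`. A linear functional `φ` gives an exclusion
function as soon as `φ (v t) ≥ 0` for `t ∈ S'` and either `φ b < 0`, or `φ b = 0` and
`φ (v t) > 0` for some `t ∈ S`; such a `φ` comes from two applications of Farkas' lemma.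
If `b` is not a nonnegative combination of the `v t`, `t ∈ S'`, the first one gives
`φ b < 0`. Otherwise `b = ∑ x₀ t • v t`, and Farkas' lemma for the generators `v t` (`t ∈ S'`) and `-b`
with target `-∑_{t ∈ S} v t` gives either the required `φ`, or `w ≥ 0` and `μ ≥ 0` with
`∑ w t • v t + ∑_{t ∈ S} v t = μ • b`; then `(x₀ + w + 1_S) / (1 + μ)` is a solution with
support between `S` and `S'`, which is excluded.
-/

open Function Module

section

variable {𝕜 E ι : Type*} [Field 𝕜] [LinearOrder 𝕜] [IsStrictOrderedRing 𝕜]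
  [AddCommGroup E] [Module 𝕜 E] [Fintype ι]

theorem exists_nonneg_sum_smul_eq_or_exists_dual [DecidableEq ι] (v : ι → E) (s : Finset ι)
    (b : E) :
    (∃ x : ι → 𝕜, 0 ≤ x ∧ support x ⊆ s ∧ ∑ i, x i • v i = b) ∨
      ∃ φ : Dual 𝕜 E, (∀ i ∈ s, 0 ≤ φ (v i)) ∧ φ b < 0 := by
  induction s using Finset.induction generalizing v b with
  | empty =>
    by_cases hb : b = 0
    · exact .inl ⟨0, le_rfl, by simp, by simp [hb]⟩
    · obtain ⟨φ, hφ⟩ := Projective.exists_dual_eq_one 𝕜 hb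
      exact .inr ⟨-φ, by simp, by simp [hφ]⟩
  | @insert a s ha ih =>
    rcases ih v b with ⟨x, hx0, hxs, hxb⟩ | ⟨φ, hφs, hφb⟩
    · exact .inl ⟨x, hx0, hxs.trans (by simp), hxb⟩
    by_cases hφa : 0 ≤ φ (v a)
    · exact .inr ⟨φ, Finset.forall_mem_insert _ _ _ |>.mpr ⟨hφa, hφs⟩, hφb⟩
    have hd : φ (v a) < 0 := not_le.mp hφa
    set d := φ (v a)
    -- Project the generators along `v a` onto `ker φ`, where `ih` applies.
    rcases ih (fun i => v i - (φ (v i) / d) • v a) (b - (φ b / d) • v a) with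
      ⟨x, hx0, hxs, hxb⟩ | ⟨ψ, hψs, hψb⟩
    · have hxφ : 0 ≤ ∑ i, x i * φ (v i) := by
        refine Finset.sum_nonneg fun i _ => ?_
        by_cases hi : i ∈ s
        · exact mul_nonneg (hx0 i) (hφs i hi)
        · simp [notMem_support.mp fun h => hi (hxs h)]
      set μ := (φ b - ∑ i, x i * φ (v i)) / d
      have hμ : 0 ≤ μ := div_nonneg_of_nonpos (by linarith) hd.le
      refine .inl ⟨x + Pi.single a μ, add_nonneg hx0 (Pi.single_nonneg.mpr hμ), ?_, ?_⟩
      · refine (support_add _ _).trans (Set.union_subset (hxs.trans ?_) ?_)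
        · simp
        · exact Pi.support_single_subset.trans (by simp)
      · simp only [smul_sub, Finset.sum_sub_distrib, smul_smul, ← mul_div_assoc,
          ← Finset.sum_smul, ← Finset.sum_div] at hxb
        simp only [Pi.add_apply, add_smul, Finset.sum_add_distrib, Pi.single_apply, ite_smul,
          zero_smul, Finset.sum_ite_eq', Finset.mem_univ, if_true, μ]
        linear_combination (norm := module) hxb
    · have hψφ : ∀ u, (ψ - (ψ (v a) / d) • φ) u = ψ (u - (φ u / d) • v a) := fun u => by
        simp only [LinearMap.sub_apply, LinearMap.smul_apply, map_sub, map_smul, smul_eq_mul]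
        ring
      refine .inr ⟨ψ - (ψ (v a) / d) • φ, ?_, by rwa [hψφ]⟩
      refine Finset.forall_mem_insert _ _ _ |>.mpr
        ⟨?_, fun i hi => by rw [hψφ]; exact hψs i hi⟩
      rw [hψφ, div_self hd.ne, one_smul, sub_self, map_zero]

theorem exists_pos_solution_of_sum_smul_eq_smul {v : ι → E} {b : E} {S S' : Set ι}
    {x u : ι → 𝕜} {μ : 𝕜}
    (hx : 0 ≤ x) (hxS' : support x ⊆ S') (hxb : ∑ i, x i • v i = b)
    (hu : 0 ≤ u) (huS : S ⊆ {i | 0 < u i}) (huS' : support u ⊆ S') (hμ : 0 ≤ μ)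
    (hub : ∑ i, u i • v i = μ • b) :
    ∃ z : ι → 𝕜, 0 ≤ z ∧ S ⊆ {i | 0 < z i} ∧ {i | 0 < z i} ⊆ S' ∧
      ∑ i, z i • v i = b := by
  have hμ' : 0 < 1 + μ := by linarith
  refine ⟨(1 + μ)⁻¹ • (x + u), smul_nonneg (inv_nonneg.mpr hμ'.le) (add_nonneg hx hu),
    fun i hi => ?_, fun i hi => ?_, ?_⟩
  · exact smul_pos (inv_pos.mpr hμ') (add_pos_of_nonneg_of_pos (hx i) (huS hi))
  · have : x i + u i ≠ 0 := fun h => hi.ne' (by simp [h])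
    rcases ne_or_eq (x i) 0 with h | h
    · exact hxS' h
    · exact huS' (by simpa [h] using this)
  · simp only [Pi.smul_apply, Pi.add_apply, smul_eq_mul, mul_smul, add_smul,
      ← Finset.smul_sum, Finset.sum_add_distrib, hxb, hub]
    rw [show b + μ • b = (1 + μ) • b by module, smul_smul, inv_mul_cancel₀ hμ'.ne',
      one_smul]

theorem exists_dual_of_not_exists_pos_solution (v : ι → E) (b : E) {S S' : Set ι}
    (hSS' : S ⊆ S')
    (h : ¬ ∃ x : ι → 𝕜, 0 ≤ x ∧ S ⊆ {i | 0 < x i} ∧ {i | 0 < x i} ⊆ S' ∧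
      ∑ i, x i • v i = b) :
    ∃ φ : Dual 𝕜 E, (∀ i ∈ S', 0 ≤ φ (v i)) ∧
      (φ b < 0 ∨ φ b = 0 ∧ ∃ i ∈ S, 0 < φ (v i)) := by
  classical
  rcases exists_nonneg_sum_smul_eq_or_exists_dual (𝕜 := 𝕜) v S'.toFinset b with
    ⟨x₀, hx₀, hx₀S', hx₀b⟩ | ⟨φ, hφS', hφb⟩
  swap
  · exact ⟨φ, fun i hi => hφS' i (Set.mem_toFinset.mpr hi), .inl hφb⟩
  rcases exists_nonneg_sum_smul_eq_or_exists_dual (𝕜 := 𝕜)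
      (fun o : Option ι => o.elim (-b) v) S'.toFinset.insertNone (-∑ i ∈ S.toFinset, v i) with
    ⟨w, hw, hwS', hwb⟩ | ⟨φ, hφS', hφS⟩
  · exfalso
    refine h (exists_pos_solution_of_sum_smul_eq_smul hx₀ (by simpa using hx₀S') hx₀b
      (u := fun i => w (some i) + if i ∈ S.toFinset then 1 else 0) (μ := w none)
      ?_ ?_ ?_ (hw none) ?_)
    · exact fun i => add_nonneg (hw (some i)) (by split_ifs <;> norm_num)
    · intro i hi
      simpa [hi] using add_pos_of_nonneg_of_pos (hw (some i)) one_pos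
    · intro i hi
      by_contra hiS'
      have hwi : w (some i) = 0 := notMem_support.mp fun h => by simpa [hiS'] using hwS' h
      simp only [mem_support, hwi, zero_add, Set.mem_toFinset, ne_eq, ite_eq_right_iff,
        one_ne_zero, imp_false, not_not] at hi
      exact hiS' (hSS' hi)
    · simp only [Fintype.sum_option, Option.elim_none, Option.elim_some, smul_neg] at hwb
      simp only [add_smul, ite_smul, one_smul, zero_smul, Finset.sum_add_distrib,
        Finset.sum_ite_mem, Finset.univ_inter]
      linear_combination (norm := module) hwb
  · have hφb : φ b ≤ 0 := by simpa using hφS' none Finset.none_mem_insertNone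
    have hφS : ∑ i ∈ S.toFinset, (0 : 𝕜) < ∑ i ∈ S.toFinset, φ (v i) := by
      simpa using hφS
    obtain ⟨i, hiS, hi⟩ := Finset.exists_lt_of_sum_lt hφS
    refine ⟨φ, fun i hi => hφS' (some i) (by simpa using hi), ?_⟩
    exact hφb.lt_or_eq.imp_right fun h => ⟨h, i, Set.mem_toFinset.mp hiS, hi⟩

end

namespace PetriNet

variable {P T : Type*} (N : PetriNet P T)

def effect (t : T) : P → ℝ := N.post t - N.pre t

variable {N}

theorem fire.eq_add_smul {t : T} {α : ℝ} {m m' : P → ℝ} (hf : N.fire t α m m') :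
    m' = m + α • N.effect t :=
  funext hf.2.2

theorem fire.apply_eq_add_mul (φ : Dual ℝ (P → ℝ)) {t : T} {α : ℝ} {m m' : P → ℝ}
    (hf : N.fire t α m m') : φ m' = φ m + α * φ (N.effect t) := by
  rw [hf.eq_add_smul, map_add, map_smul, smul_eq_mul]

theorem isExclusionFun_of_dual {S S' : Set T} {msrc mtgt : P → ℝ} (φ : Dual ℝ (P → ℝ))
    (hS' : ∀ t ∈ S', 0 ≤ φ (N.effect t))
    (hφ : φ (mtgt - msrc) < 0 ∨ φ (mtgt - msrc) = 0 ∧ ∃ t ∈ S, 0 < φ (N.effect t)) :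
    N.IsExclusionFun S S' msrc mtgt φ := by
  refine ⟨fun t ht α m m' hf => ?_, ?_⟩
  · rw [hf.apply_eq_add_mul]
    nlinarith [hf.1, hS' t ht]
  · rw [map_sub, sub_neg, sub_eq_zero] at hφ
    refine hφ.imp id fun ⟨hb, t, htS, ht⟩ => ⟨hb.symm, t, htS, fun α m m' hf => ?_⟩
    rw [hf.apply_eq_add_mul]
    nlinarith [hf.1]

theorem add_sum_effect_eq_iff [Fintype T] (x : T → ℝ) (msrc mtgt : P → ℝ) :
    (∀ p, msrc p + ∑ t, (N.post t p - N.pre t p) * x t = mtgt p) ↔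
      ∑ t, x t • N.effect t = mtgt - msrc := by
  refine forall_congr' (fun p => ?_) |>.trans funext_iff.symm
  simp only [Finset.sum_apply, Pi.smul_apply, effect, Pi.sub_apply, smul_eq_mul, mul_comm (x _)]
  rw [eq_sub_iff_add_eq, add_comm]

end PetriNet

open PetriNet

theorem exists_linear_exclusionFun_general
    {P T : Type*} [Fintype P] [Fintype T]
    (N : PetriNet P T) (msrc mtgt : P → ℝ)
    (S S' : Set T) (hSS' : S ⊆ S')
    (h : ¬ ∃ x : T → ℝ, 0 ≤ x ∧ S ⊆ {t | 0 < x t} ∧ {t | 0 < x t} ⊆ S' ∧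
        ∀ p, msrc p + ∑ t : T, (N.post t p - N.pre t p) * x t = mtgt p) :
    ∃ y : P → ℝ,
      IsExclusionFun N S S' msrc mtgt (fun m => ∑ p : P, y p * m p) := by
  classical
  simp only [add_sum_effect_eq_iff] at h
  obtain ⟨φ, hS', hφ⟩ := exists_dual_of_not_exists_pos_solution N.effect _ hSS' h
  refine ⟨(dotProductEquiv ℝ P).symm φ, ?_⟩
  convert isExclusionFun_of_dual φ hS' hφ
  exact LinearMap.congr_fun ((dotProductEquiv ℝ P).apply_symm_apply φ) _

/-- If no vector `x ≥ 0` satisfies `S ⊆ supp(x) ⊆ S'` and `msrc + F x = mtgt`,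
then there exists a linear exclusion function for `(S, S')`. -/
theorem exists_linear_exclusionFun
    {P T : Type*} [Fintype P] [Fintype T]
    (N : PetriNet P T) (msrc mtgt : P → ℝ)
    (hsrc : 0 ≤ msrc) (htgt : 0 ≤ mtgt)
    (S S' : Set T) (hSS' : S ⊆ S')
    (h : ¬ ∃ x : T → ℝ, 0 ≤ x ∧ S ⊆ {t | 0 < x t} ∧ {t | 0 < x t} ⊆ S' ∧
        ∀ p, msrc p + ∑ t : T, (N.post t p - N.pre t p) * x t = mtgt p) :
    ∃ y : P → ℝ,
      IsExclusionFun N S S' msrc mtgt (fun m => ∑ p : P, y p * m p) :=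
  exists_linear_exclusionFun_general N msrc mtgt S S' hSS' h
end

section
/- Let N = (P,T,F) be a continuous Petri net, let U ⊆ T, and let m_src, m_tgt ∈ (ℝ≥0)^P. Then ¬(m_src ⇝_U m_tgt) if and only if at least one of the following holds: (1) there exists a linear exclusion function for (U,U) relative to m_src and m_tgt; or (2) there exists a siphon Q of N_U with Q• ≠ ∅ (in N_U) and m_src(Q) = 0; or (3) there exists a trap R of N_U with •R ≠ ∅ (in N_U) and m_tgt(R) = 0. -/
namespace PetriNet

variable {P T : Type*}

/-- `•X` computed in the restricted net `N_U`. -/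
def preSetOn (N : PetriNet P T) (U : Set T) (X : Finset P) : Set T :=
  {t | t ∈ U ∧ ∃ p ∈ X, 0 < N.Fplus p t}

/-- `X•` computed in the restricted net `N_U`. -/
def postSetOn (N : PetriNet P T) (U : Set T) (X : Finset P) : Set T :=
  {t | t ∈ U ∧ ∃ p ∈ X, 0 < N.Fminus p t}

end PetriNet

open PetriNet

namespace PetriNetProof

open PetriNet

variable {P T : Type*}

variable {N : PetriNet P T}

lemma pre_nonneg (N : PetriNet P T) (t : T) (p : P) : 0 ≤ N.pre t p := Nat.cast_nonneg _
lemma post_nonneg (N : PetriNet P T) (t : T) (p : P) : 0 ≤ N.post t p := Nat.cast_nonneg _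

lemma fire_nonneg {t α} {m m' : P → ℝ} (h : N.fire t α m m') (hm : ∀ p, 0 ≤ m p) :
    ∀ p, 0 ≤ m' p := by
  intro p
  obtain ⟨hα, hle, heq⟩ := h
  have := hle p
  have hpost : 0 ≤ α * N.post t p := mul_nonneg hα.le (post_nonneg N t p)
  rw [heq p]; nlinarith [post_nonneg N t p]

lemma fire_ge_post {t α} {m m' : P → ℝ} (h : N.fire t α m m') :
    ∀ p, α * N.post t p ≤ m' p := by
  intro p
  obtain ⟨hα, hle, heq⟩ := h
  have := hle p
  rw [heq p]; ring_nf; nlinarith [post_nonneg N t p]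

lemma fire_transpose {t α} {m m' : P → ℝ} (h : N.fire t α m m') :
    N.transpose.fire t α m' m := by
  obtain ⟨hα, hle, heq⟩ := h
  refine ⟨hα, fun p => ?_, fun p => ?_⟩
  · exact fire_ge_post ⟨hα, hle, heq⟩ p
  · have := heq p
    show m p = m' p + α * (N.pre t p - N.post t p)
    rw [this]; ring

lemma fireSeq_nonneg {σ} {m m' : P → ℝ} (h : N.fireSeq σ m m') (hm : ∀ p, 0 ≤ m p) :
    ∀ p, 0 ≤ m' p := by
  induction σ generalizing m with
  | nil => cases h; exact hm
  | cons a σ ih =>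
    obtain ⟨α, t⟩ := a
    obtain ⟨m₁, hf, hs⟩ := h
    exact ih hs (fire_nonneg hf hm)

lemma fireSeq_append {σ₁ σ₂} {m m'' : P → ℝ} :
    N.fireSeq (σ₁ ++ σ₂) m m'' ↔ ∃ m', N.fireSeq σ₁ m m' ∧ N.fireSeq σ₂ m' m'' := by
  induction σ₁ generalizing m with
  | nil =>
    simp only [List.nil_append]
    constructor
    · intro h; exact ⟨m, rfl, h⟩
    · rintro ⟨m', h1, h2⟩; cases h1; exact h2
  | cons a σ ih =>
    obtain ⟨α, t⟩ := a
    constructor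
    · rintro ⟨m₁, hf, hs⟩
      obtain ⟨m', h1, h2⟩ := ih.1 hs
      exact ⟨m', ⟨m₁, hf, h1⟩, h2⟩
    · rintro ⟨m', ⟨m₁, hf, h1⟩, h2⟩
      exact ⟨m₁, hf, ih.2 ⟨m', h1, h2⟩⟩

lemma seqSupport_append (σ₁ σ₂ : List (ℝ × T)) :
    seqSupport (σ₁ ++ σ₂) = seqSupport σ₁ ∪ seqSupport σ₂ := by
  ext t
  simp [seqSupport, List.mem_append, or_and_right, exists_or]

lemma seqSupport_nil : seqSupport ([] : List (ℝ × T)) = ∅ := by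
  ext t; simp [seqSupport]

/-- scaling a firing sequence -/
def scaleSeq (c : ℝ) (σ : List (ℝ × T)) : List (ℝ × T) := σ.map fun q => (c * q.1, q.2)

lemma seqSupport_scaleSeq {c : ℝ} (σ : List (ℝ × T)) :
    seqSupport (scaleSeq c σ) = seqSupport σ := by
  ext t
  simp only [seqSupport, scaleSeq, Set.mem_setOf_eq, List.mem_map, Prod.mk.injEq]
  constructor
  · rintro ⟨α, ⟨β, s⟩, hm, h1, h2⟩
    dsimp at h2; subst h2; exact ⟨β, hm⟩
  · rintro ⟨α, hm⟩; exact ⟨c * α, ⟨α, t⟩, hm, rfl, rfl⟩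

lemma fire_scale {t α c} (hc : 0 < c) {m m' : P → ℝ} (h : N.fire t α m m') :
    N.fire t (c * α) (fun p => c * m p) (fun p => c * m' p) := by
  obtain ⟨hα, hle, heq⟩ := h
  refine ⟨by positivity, fun p => ?_, fun p => ?_⟩
  · show c * α * N.pre t p ≤ c * m p
    have := hle p; nlinarith
  · show c * m' p = c * m p + c * α * (N.post t p - N.pre t p)
    rw [heq p]; ring

lemma fireSeq_scale {c} (hc : 0 < c) {σ} {m m' : P → ℝ} (h : N.fireSeq σ m m') :
    N.fireSeq (scaleSeq c σ) (fun p => c * m p) (fun p => c * m' p) := by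
  induction σ generalizing m with
  | nil => cases h; rfl
  | cons a σ ih =>
    obtain ⟨α, t⟩ := a
    obtain ⟨m₁, hf, hs⟩ := h
    exact ⟨fun p => c * m₁ p, fire_scale hc hf, ih hs⟩

lemma fire_shift {t α} {m m' v : P → ℝ} (hv : ∀ p, 0 ≤ v p) (h : N.fire t α m m') :
    N.fire t α (fun p => m p + v p) (fun p => m' p + v p) := by
  obtain ⟨hα, hle, heq⟩ := h
  refine ⟨hα, fun p => ?_, fun p => ?_⟩
  · show α * N.pre t p ≤ m p + v p
    have := hle p; have := hv p; linarith
  · show m' p + v p = m p + v p + α * (N.post t p - N.pre t p)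
    rw [heq p]; ring

lemma fireSeq_shift {σ} {m m' v : P → ℝ} (hv : ∀ p, 0 ≤ v p) (h : N.fireSeq σ m m') :
    N.fireSeq σ (fun p => m p + v p) (fun p => m' p + v p) := by
  induction σ generalizing m with
  | nil => cases h; rfl
  | cons a σ ih =>
    obtain ⟨α, t⟩ := a
    obtain ⟨m₁, hf, hs⟩ := h
    exact ⟨fun p => m₁ p + v p, fire_shift hv hf, ih hs⟩

/-- combine two runs from the same nonneg marking: reach the average with union support -/
lemma fireSeq_combine {σ₁ σ₂} {m m₁ m₂ : P → ℝ} (hm : ∀ p, 0 ≤ m p)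
    (h₁ : N.fireSeq σ₁ m m₁) (h₂ : N.fireSeq σ₂ m m₂) :
    N.fireSeq (scaleSeq (1/2) σ₁ ++ scaleSeq (1/2) σ₂) m (fun p => (m₁ p + m₂ p) / 2) := by
  have hm₁ : ∀ p, 0 ≤ m₁ p := fireSeq_nonneg h₁ hm
  have h12 : (0:ℝ) < 1/2 := by norm_num
  have s1 := fireSeq_scale h12 h₁
  have s2 := fireSeq_scale h12 h₂
  have s1' := fireSeq_shift (v := fun p => (1/2) * m p) (fun p => by have := hm p; positivity) s1
  have s2' := fireSeq_shift (v := fun p => (1/2) * m₁ p) (fun p => by have := hm₁ p; positivity) s2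
  rw [fireSeq_append]
  refine ⟨fun p => (1/2) * m₁ p + (1/2) * m p, ?_, ?_⟩
  · convert s1' using 2 with p
    ring
  · have e1 : (fun p : P => 1 / 2 * m₁ p + 1 / 2 * m p) = (fun p => 1 / 2 * m p + (fun p => 1 / 2 * m₁ p) p) := by
      funext p; ring
    have e2 : (fun p => (m₁ p + m₂ p) / 2) = (fun p => 1 / 2 * m₂ p + (fun p => 1 / 2 * m₁ p) p) := by
      funext p; ring
    rw [e1, e2]; exact s2' 

lemma fireSeq_split {σ} {α t} {m m' : P → ℝ} (h : N.fireSeq σ m m') (hmem : (α, t) ∈ σ) :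
    ∃ (σ₁ σ₂ : List (ℝ × T)) (ma mb : P → ℝ), σ = σ₁ ++ (α, t) :: σ₂ ∧ N.fireSeq σ₁ m ma ∧
      N.fire t α ma mb ∧ N.fireSeq σ₂ mb m' := by
  induction σ generalizing m with
  | nil => cases hmem
  | cons a σ ih =>
    obtain ⟨β, s⟩ := a
    obtain ⟨m₁, hf, hs⟩ := h
    rcases List.mem_cons.1 hmem with h1 | h2
    · cases h1
      exact ⟨[], σ, m, m₁, rfl, rfl, hf, hs⟩
    · obtain ⟨σ₁, σ₂, ma, mb, rfl, a1, a2, a3⟩ := ih hs h2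
      exact ⟨(β, s) :: σ₁, σ₂, ma, mb, rfl, ⟨m₁, hf, a1⟩, a2, a3⟩

lemma fireSeq_reverse {σ} {m m' : P → ℝ} (h : N.fireSeq σ m m') :
    N.transpose.fireSeq σ.reverse m' m := by
  induction σ generalizing m with
  | nil => cases h; rfl
  | cons a σ ih =>
    obtain ⟨α, t⟩ := a
    obtain ⟨m₁, hf, hs⟩ := h
    have := ih hs
    simp only [List.reverse_cons]
    rw [fireSeq_append]
    exact ⟨m₁, this, ⟨m, fire_transpose hf, rfl⟩⟩

lemma seqSupport_reverse (σ : List (ℝ × T)) : seqSupport σ.reverse = seqSupport σ := by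
  ext t; simp [seqSupport]

/-- monotonicity of a function along a fire sequence -/
lemma fireSeq_mono {σ} {m m' : P → ℝ} (f : (P → ℝ) → ℝ)
    (hf : ∀ t ∈ seqSupport σ, ∀ α (m₁ m₂ : P → ℝ), N.fire t α m₁ m₂ → f m₁ ≤ f m₂)
    (h : N.fireSeq σ m m') : f m ≤ f m' := by
  induction σ generalizing m with
  | nil => cases h; exact le_refl _
  | cons a σ ih =>
    obtain ⟨α, t⟩ := a
    obtain ⟨m₁, hfi, hs⟩ := h
    have h1 : f m ≤ f m₁ := hf t ⟨α, List.mem_cons_self⟩ α m m₁ hfi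
    have h2 : f m₁ ≤ f m' := ih (fun s hs' α' m₁' m₂' => hf s (by
      obtain ⟨β, hb⟩ := hs'; exact ⟨β, List.mem_cons_of_mem _ hb⟩) α' m₁' m₂') hs
    linarith

lemma fireSeq_pos_amounts {σ} {m m' : P → ℝ} (h : N.fireSeq σ m m') {α t}
    (hmem : (α, t) ∈ σ) : 0 < α := by
  obtain ⟨_, _, _, _, _, _, hf, _⟩ := fireSeq_split h hmem
  exact hf.1


lemma seqSupport_cons (α : ℝ) (t : T) (σ : List (ℝ × T)) :
    seqSupport ((α, t) :: σ) = insert t (seqSupport σ) := by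
  ext s
  simp only [seqSupport, Set.mem_setOf_eq, List.mem_cons, Prod.mk.injEq, Set.mem_insert_iff]
  constructor
  · rintro ⟨β, ⟨h1, h2⟩ | h⟩
    · exact Or.inl h2
    · exact Or.inr ⟨β, h⟩
  · rintro (rfl | ⟨β, h⟩)
    · exact ⟨α, Or.inl ⟨rfl, rfl⟩⟩
    · exact ⟨β, Or.inr h⟩

open scoped Classical

/-- Parikh image of a firing sequence -/
noncomputable def parikh (σ : List (ℝ × T)) (t : T) : ℝ :=
  (σ.map (fun q => if q.2 = t then q.1 else 0)).sum

@[simp] lemma parikh_nil (t : T) : parikh ([] : List (ℝ × T)) t = 0 := rfl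

lemma parikh_cons (α : ℝ) (t₀ t : T) (σ : List (ℝ × T)) :
    parikh ((α, t₀) :: σ) t = (if t₀ = t then α else 0) + parikh σ t := by
  simp [parikh]

lemma parikh_nonneg {σ : List (ℝ × T)} (hσ : ∀ α t, (α, t) ∈ σ → 0 < α) (t : T) :
    0 ≤ parikh σ t := by
  induction σ with
  | nil => simp
  | cons a σ ih =>
    obtain ⟨α, s⟩ := a
    rw [parikh_cons]
    have h1 : 0 < α := hσ α s (List.mem_cons_self)
    have h2 : 0 ≤ parikh σ t := ih (fun β u hu => hσ β u (List.mem_cons_of_mem _ hu))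
    split <;> linarith

lemma parikh_eq_zero {σ : List (ℝ × T)} {t : T} (h : t ∉ seqSupport σ) : parikh σ t = 0 := by
  induction σ with
  | nil => simp
  | cons a σ ih =>
    obtain ⟨α, s⟩ := a
    rw [seqSupport_cons] at h
    rw [parikh_cons, if_neg (by rintro rfl; exact h (Set.mem_insert _ _)),
      ih (fun hm => h (Set.mem_insert_iff.2 (Or.inr hm))), add_zero]

lemma parikh_scale (c : ℝ) (σ : List (ℝ × T)) (t : T) :
    parikh (scaleSeq c σ) t = c * parikh σ t := by
  induction σ with
  | nil => simp [scaleSeq]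
  | cons a σ ih =>
    obtain ⟨α, s⟩ := a
    show parikh ((c * α, s) :: scaleSeq c σ) t = _
    rw [parikh_cons, parikh_cons, ih]
    split <;> ring

lemma fireSeq_parikh [Fintype T] {σ} {m m' : P → ℝ} (h : N.fireSeq σ m m') :
    ∀ p, m' p = m p + ∑ t, parikh σ t * (N.post t p - N.pre t p) := by
  induction σ generalizing m with
  | nil => cases h; simp
  | cons a σ ih =>
    obtain ⟨α, t₀⟩ := a
    obtain ⟨m₁, hf, hs⟩ := h
    intro p
    have h1 := ih hs p
    have h2 := hf.2.2 p
    rw [h1, h2]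
    have : ∀ t : T, parikh ((α, t₀) :: σ) t * (N.post t p - N.pre t p)
        = (if t₀ = t then α * (N.post t p - N.pre t p) else 0)
          + parikh σ t * (N.post t p - N.pre t p) := by
      intro t; rw [parikh_cons]; split <;> ring
    rw [Finset.sum_congr rfl (fun t _ => this t), Finset.sum_add_distrib,
      Finset.sum_ite_eq Finset.univ t₀ (fun t => α * (N.post t p - N.pre t p)),
      if_pos (Finset.mem_univ _)]
    ring

section Round

variable [Fintype P] [Fintype T]

lemma sum_update_mul (x : T → ℝ) (t₀ : T) (f : T → ℝ) :
    ∑ t, Function.update x t₀ 0 t * f t = (∑ t, x t * f t) - x t₀ * f t₀ := by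
  have : ∀ t, Function.update x t₀ 0 t * f t
      = x t * f t - (if t = t₀ then x t₀ * f t₀ else 0) := by
    intro t
    rcases eq_or_ne t t₀ with rfl | h
    · simp [Function.update_self]
    · simp [Function.update_of_ne h, h]
  rw [Finset.sum_congr rfl (fun t _ => this t), Finset.sum_sub_distrib,
    Finset.sum_ite_eq' Finset.univ t₀ (fun _ => x t₀ * f t₀), if_pos (Finset.mem_univ _)]

/-- one round: fire all of `supp x` once, amounts `x t`, provided the total
pre-consumption fits below `m`. -/
lemma fire_round (x : T → ℝ) (hx : ∀ t, 0 ≤ x t) (m : P → ℝ)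
    (hle : ∀ p, ∑ t, x t * N.pre t p ≤ m p) :
    ∃ σ, N.fireSeq σ m (fun p => m p + ∑ t, x t * (N.post t p - N.pre t p)) ∧
      seqSupport σ = {t | 0 < x t} := by
  have key : ∀ (n : ℕ) (x : T → ℝ), (Finset.univ.filter (fun t => 0 < x t)).card ≤ n →
      (∀ t, 0 ≤ x t) → ∀ m : P → ℝ, (∀ p, ∑ t, x t * N.pre t p ≤ m p) →
      ∃ σ, N.fireSeq σ m (fun p => m p + ∑ t, x t * (N.post t p - N.pre t p)) ∧
        seqSupport σ = {t | 0 < x t} := by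
    intro n
    induction n with
    | zero =>
      intro x hcard hx m hle
      have hzero : ∀ t, x t = 0 := by
        intro t
        by_contra h
        have ht : t ∈ Finset.univ.filter (fun t => 0 < x t) := by
          simp [lt_of_le_of_ne (hx t) (Ne.symm h)]
        have := Finset.card_pos.2 ⟨t, ht⟩
        omega
      refine ⟨[], ?_, ?_⟩
      · show m = _
        funext p; simp [hzero]
      · rw [seqSupport_nil]
        ext t; simp [hzero t]
    | succ n ih =>
      intro x hcard hx m hle
      rcases Finset.eq_empty_or_nonempty (Finset.univ.filter (fun t => 0 < x t)) with he | hne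
      · have hzero : ∀ t, x t = 0 := by
          intro t
          by_contra h
          have ht : t ∈ Finset.univ.filter (fun t => 0 < x t) := by
            simp [lt_of_le_of_ne (hx t) (Ne.symm h)]
          rw [he] at ht; exact absurd ht (Finset.notMem_empty _)
        refine ⟨[], ?_, ?_⟩
        · show m = _
          funext p; simp [hzero]
        · rw [seqSupport_nil]
          ext t; simp [hzero t]
      · obtain ⟨t₀, ht₀⟩ := hne
        have hxt₀ : 0 < x t₀ := (Finset.mem_filter.1 ht₀).2
        set m₁ : P → ℝ := fun p => m p + x t₀ * (N.post t₀ p - N.pre t₀ p) with hm₁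
        have hfire : N.fire t₀ (x t₀) m m₁ := by
          refine ⟨hxt₀, fun p => ?_, fun p => rfl⟩
          calc x t₀ * N.pre t₀ p ≤ ∑ t, x t * N.pre t p := by
                refine Finset.single_le_sum (f := fun t => x t * N.pre t p) (fun t _ => ?_) (Finset.mem_univ t₀)
                exact mul_nonneg (hx t) (pre_nonneg N t p)
            _ ≤ m p := hle p
        set x' := Function.update x t₀ 0 with hx'
        have hx'n : ∀ t, 0 ≤ x' t := by
          intro t
          rcases eq_or_ne t t₀ with rfl | h
          · simp [hx', Function.update_self]
          · simpa [hx', Function.update_of_ne h] using hx t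
        have hcard' : (Finset.univ.filter (fun t => 0 < x' t)).card ≤ n := by
          have hsub : Finset.univ.filter (fun t => 0 < x' t)
              ⊆ (Finset.univ.filter (fun t => 0 < x t)).erase t₀ := by
            intro t ht
            simp only [Finset.mem_filter, Finset.mem_univ, true_and] at ht
            rcases eq_or_ne t t₀ with rfl | h
            · simp [hx', Function.update_self] at ht
            · rw [hx', Function.update_of_ne h] at ht
              exact Finset.mem_erase.2 ⟨h, by simp [ht]⟩
          have := Finset.card_le_card hsub
          have h2 := Finset.card_erase_of_mem ht₀
          omega
        have hle' : ∀ p, ∑ t, x' t * N.pre t p ≤ m₁ p := by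
          intro p
          rw [hx', sum_update_mul]
          have h1 := hle p
          have h2 : 0 ≤ x t₀ * N.post t₀ p := mul_nonneg hxt₀.le (post_nonneg N t₀ p)
          show _ ≤ m p + x t₀ * (N.post t₀ p - N.pre t₀ p)
          nlinarith
        obtain ⟨σ', hσ', hsupp'⟩ := ih x' hcard' hx'n m₁ hle'
        refine ⟨(x t₀, t₀) :: σ', ⟨m₁, hfire, ?_⟩, ?_⟩
        · convert hσ' using 1
          funext p
          rw [hx', sum_update_mul]
          show m p + _ = m p + x t₀ * (N.post t₀ p - N.pre t₀ p) + _
          ring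
        · rw [seqSupport_cons, hsupp']
          ext t
          simp only [Set.mem_insert_iff, Set.mem_setOf_eq]
          constructor
          · rintro (rfl | h)
            · exact hxt₀
            · rcases eq_or_ne t t₀ with rfl | hne
              · exact hxt₀
              · rwa [hx', Function.update_of_ne hne] at h
          · intro h
            rcases eq_or_ne t t₀ with rfl | hne
            · exact Or.inl rfl
            · exact Or.inr (by rwa [hx', Function.update_of_ne hne])
  exact key _ x le_rfl hx m hle


/-- slicing: move along `m' = m + Fx` when all touched places are marked at both ends. -/
lemma fire_slices (x : T → ℝ) (hx : ∀ t, 0 ≤ x t) (m m' : P → ℝ)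
    (hm : ∀ p, 0 ≤ m p)
    (heq : ∀ p, m' p = m p + ∑ t, x t * (N.post t p - N.pre t p))
    (hmark : ∀ p, (∃ t, 0 < x t ∧ (0 < N.pre t p ∨ 0 < N.post t p)) → 0 < m p ∧ 0 < m' p) :
    ∃ σ, N.fireSeq σ m m' ∧ seqSupport σ = {t | 0 < x t} := by
  set touched : P → Prop := fun p => ∃ t, 0 < x t ∧ (0 < N.pre t p ∨ 0 < N.post t p)
    with htouched
  have hun : ∀ p, ¬ touched p → ∀ t, x t * N.pre t p = 0 ∧ x t * N.post t p = 0 := by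
    intro p h t
    rcases eq_or_lt_of_le (hx t) with hz | hpos
    · rw [← hz]; simp
    · have h1 : N.pre t p = 0 := by
        by_contra hc
        exact h ⟨t, hpos, Or.inl (lt_of_le_of_ne (pre_nonneg N t p) (Ne.symm hc))⟩
      have h2 : N.post t p = 0 := by
        by_contra hc
        exact h ⟨t, hpos, Or.inr (lt_of_le_of_ne (post_nonneg N t p) (Ne.symm hc))⟩
      rw [h1, h2]; simp
  have hunC : ∀ p, ¬ touched p → (∑ t, x t * N.pre t p = 0) ∧ m' p = m p := by
    intro p h
    constructor
    · exact Finset.sum_eq_zero (fun t _ => (hun p h t).1)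
    · rw [heq p]
      have : ∀ t : T, x t * (N.post t p - N.pre t p) = 0 := by
        intro t
        have := hun p h t
        have := this.1; have := (hun p h t).2
        nlinarith [(hun p h t).1, (hun p h t).2]
      rw [Finset.sum_eq_zero (fun t _ => this t)]; ring
  -- choose k
  set B : ℝ := ((Finset.univ.filter touched).image
      (fun p => (∑ t, x t * N.pre t p) / min (m p) (m' p))).fold max 1 id with hB
  obtain ⟨k, hkB⟩ := exists_nat_gt B
  have hB1 : (1:ℝ) ≤ B := (Finset.le_fold_max _).2 (Or.inl le_rfl)
  have hk0 : (0:ℝ) < (k:ℝ) := by linarith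
  have hkey : ∀ p, touched p → ∑ t, x t * N.pre t p ≤ (k:ℝ) * min (m p) (m' p) := by
    intro p hp
    have hδ : 0 < min (m p) (m' p) := lt_min (hmark p hp).1 (hmark p hp).2
    have hmem : (∑ t, x t * N.pre t p) / min (m p) (m' p) ≤ B := by
      exact (Finset.le_fold_max _).2 (Or.inr ⟨_, Finset.mem_image_of_mem _ (by simp [hp]), le_rfl⟩)
    have : (∑ t, x t * N.pre t p) / min (m p) (m' p) ≤ (k:ℝ) := le_trans hmem hkB.le
    calc ∑ t, x t * N.pre t p = ((∑ t, x t * N.pre t p) / min (m p) (m' p)) * min (m p) (m' p) := by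
          field_simp
      _ ≤ (k:ℝ) * min (m p) (m' p) := by
          exact mul_le_mul_of_nonneg_right this hδ.le
  set M : ℕ → P → ℝ := fun j p => m p + ((j:ℝ)/(k:ℝ)) * ∑ t, x t * (N.post t p - N.pre t p)
    with hM
  have main : ∀ j : ℕ, j ≤ k → ∃ σ, N.fireSeq σ m (M j) ∧
      seqSupport σ = (if j = 0 then (∅ : Set T) else {t | 0 < x t}) := by
    intro j
    induction j with
    | zero =>
      intro _
      refine ⟨[], ?_, by rw [seqSupport_nil]; simp⟩
      show m = M 0
      funext p; simp [hM]
    | succ j ih =>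
      intro hjk
      obtain ⟨σj, hσj, hsuppj⟩ := ih (le_of_lt (Nat.lt_of_succ_le hjk))
      have hjk' : (j:ℝ) ≤ (k:ℝ) := by exact_mod_cast le_of_lt (Nat.lt_of_succ_le hjk)
      have hjnn : (0:ℝ) ≤ (j:ℝ)/(k:ℝ) := by positivity
      have hjle1 : (j:ℝ)/(k:ℝ) ≤ 1 := by
        rw [div_le_one hk0]; exact hjk'
      -- round from M j with x/k
      have hle' : ∀ p, ∑ t, (x t / (k:ℝ)) * N.pre t p ≤ M j p := by
        intro p
        have hsum : ∑ t, (x t / (k:ℝ)) * N.pre t p = (∑ t, x t * N.pre t p) / (k:ℝ) := by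
          rw [Finset.sum_div]
          exact Finset.sum_congr rfl (fun t _ => by ring)
        rw [hsum]
        by_cases hp : touched p
        · have h1 := hkey p hp
          have hδ : 0 < min (m p) (m' p) := lt_min (hmark p hp).1 (hmark p hp).2
          have h2 : (∑ t, x t * N.pre t p) / (k:ℝ) ≤ min (m p) (m' p) := by
            rw [div_le_iff₀ hk0]; linarith
          have h3 : min (m p) (m' p) ≤ M j p := by
            have hS : ∑ t, x t * (N.post t p - N.pre t p) = m' p - m p := by
              rw [heq p]; ring
            rw [hM]; dsimp only
            rw [hS]
            rcases le_total (m p) (m' p) with hc | hc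
            · have : min (m p) (m' p) = m p := min_eq_left hc
              rw [this]; nlinarith
            · have : min (m p) (m' p) = m' p := min_eq_right hc
              rw [this]; nlinarith
          exact le_trans h2 h3
        · have h1 := (hunC p hp).1
          have h2 := (hunC p hp).2
          rw [h1, zero_div, hM]; dsimp only
          have hS : ∑ t, x t * (N.post t p - N.pre t p) = m' p - m p := by
            rw [heq p]; ring
          rw [hS, h2, sub_self, mul_zero, add_zero]
          exact hm p
      obtain ⟨σr, hσr, hsuppr⟩ := fire_round (N := N) (fun t => x t / (k:ℝ))
        (fun t => div_nonneg (hx t) hk0.le) (M j) hle'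
      have hMr : (fun p => M j p + ∑ t, (x t / (k:ℝ)) * (N.post t p - N.pre t p)) = M (j+1) := by
        funext p
        rw [hM]; dsimp only
        have hsum : ∑ t, (x t / (k:ℝ)) * (N.post t p - N.pre t p)
            = (∑ t, x t * (N.post t p - N.pre t p)) / (k:ℝ) := by
          rw [Finset.sum_div]
          exact Finset.sum_congr rfl (fun t _ => by ring)
        rw [hsum]
        push_cast
        field_simp
        ring
      have hsuppr' : seqSupport σr = {t | 0 < x t} := by
        rw [hsuppr]
        ext t
        simp only [Set.mem_setOf_eq]
        constructor
        · intro h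
          have : 0 < (x t / (k:ℝ)) * (k:ℝ) := mul_pos h hk0
          rwa [div_mul_cancel₀] at this
          exact ne_of_gt hk0
        · intro h; exact div_pos h hk0
      refine ⟨σj ++ σr, ?_, ?_⟩
      · rw [fireSeq_append]
        exact ⟨M j, hσj, hMr ▸ hσr⟩
      · rw [seqSupport_append, hsuppj, hsuppr']
        simp only [Nat.succ_ne_zero, if_false]
        split
        · exact Set.empty_union _
        · exact Set.union_self _
  obtain ⟨σ, hσ, hsupp⟩ := main k le_rfl
  have hMk : M k = m' := by
    funext p
    rw [hM]; dsimp only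
    rw [div_self (ne_of_gt hk0), one_mul, ← heq p]
  have hk0' : k ≠ 0 := by
    intro h; rw [h] at hk0; simp at hk0
  rw [hMk] at hσ
  rw [if_neg hk0'] at hsupp
  exact ⟨σ, hσ, hsupp⟩

end Round


section Farkas

variable [Fintype P]

/-- pairing on `ℝ^P` -/
def pairP (u v : P → ℝ) : ℝ := ∑ p, u p * v p

lemma pairP_comm (u v : P → ℝ) : pairP u v = pairP v u := by
  unfold pairP; exact Finset.sum_congr rfl (fun p _ => mul_comm _ _)

lemma pairP_sub_mul_left (u : P → ℝ) (r : ℝ) (v w : P → ℝ) :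
    pairP (fun p => u p - r * v p) w = pairP u w - r * pairP v w := by
  unfold pairP
  rw [Finset.mul_sum, ← Finset.sum_sub_distrib]
  exact Finset.sum_congr rfl (fun p _ => by ring)

lemma pairP_sub_mul_right (u : P → ℝ) (r : ℝ) (v w : P → ℝ) :
    pairP w (fun p => u p - r * v p) = pairP w u - r * pairP w v := by
  rw [pairP_comm, pairP_sub_mul_left, pairP_comm u w, pairP_comm v w]

lemma pairP_self_pos {u : P → ℝ} (hu : u ≠ 0) : 0 < pairP u u := by
  have : ∃ p, u p ≠ 0 := by
    by_contra h
    push_neg at h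
    exact hu (funext h)
  obtain ⟨p₀, hp₀⟩ := this
  exact Finset.sum_pos' (fun p _ => mul_self_nonneg _)
    ⟨p₀, Finset.mem_univ _, mul_self_pos.2 hp₀⟩

/-- membership in the convex cone generated by a list of vectors -/
def inCone : List (P → ℝ) → (P → ℝ) → Prop
  | [], c => c = 0
  | a :: l, c => ∃ μ : ℝ, 0 ≤ μ ∧ inCone l (fun p => c p - μ * a p)

lemma inCone_lift (a : P → ℝ) (g : (P → ℝ) → ℝ)
    (hg : ∀ (u : P → ℝ) (μ : ℝ) (b : P → ℝ),
      g (fun p => u p - μ * b p) = g u - μ * g b) :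
    ∀ (l : List (P → ℝ)), (∀ b ∈ l, g b ≤ 0) → ∀ c : P → ℝ,
      inCone (l.map (fun b => fun p => b p - g b * a p)) (fun p => c p - g c * a p) →
      ∃ r : ℝ, g c ≤ r ∧ inCone l (fun p => c p - r * a p) := by
  intro l
  induction l with
  | nil =>
    intro _ c hc
    exact ⟨g c, le_rfl, hc⟩
  | cons b l ih =>
    intro hbl c hc
    obtain ⟨μ, hμ, hcone⟩ := hc
    have hfun : (fun p => (fun p => c p - g c * a p) p - μ * (fun p => b p - g b * a p) p)
        = (fun p => (fun p => c p - μ * b p) p - g (fun p => c p - μ * b p) * a p) := by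
      funext p
      rw [hg c μ b]
      dsimp only
      ring
    rw [hfun] at hcone
    obtain ⟨r, hr, hcone'⟩ := ih (fun b' hb' => hbl b' (List.mem_cons_of_mem _ hb'))
      (fun p => c p - μ * b p) hcone
    rw [hg c μ b] at hr
    refine ⟨r, ?_, ⟨μ, hμ, ?_⟩⟩
    · have hgb : g b ≤ 0 := hbl b (List.mem_cons_self)
      nlinarith
    · have : (fun p => (fun p => c p - r * a p) p - μ * b p)
          = (fun p => (fun p => c p - μ * b p) p - r * a p) := by
        funext p; dsimp only; ring
      rw [this]
      exact hcone'

theorem farkas : ∀ (l : List (P → ℝ)) (c : P → ℝ),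
    inCone l c ∨ ∃ y : P → ℝ, (∀ a ∈ l, 0 ≤ pairP a y) ∧ pairP c y < 0 := by
  suffices H : ∀ (n : ℕ) (l : List (P → ℝ)), l.length ≤ n → ∀ (c : P → ℝ),
      inCone l c ∨ ∃ y : P → ℝ, (∀ a ∈ l, 0 ≤ pairP a y) ∧ pairP c y < 0 by
    intro l c; exact H l.length l le_rfl c
  intro n
  induction n with
  | zero =>
    intro l hl c
    rw [List.length_eq_zero_iff.1 (Nat.le_zero.1 hl)]
    by_cases hc : c = 0
    · exact Or.inl hc
    · refine Or.inr ⟨fun p => -c p, by simp, ?_⟩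
      have h1 : pairP c (fun p => -c p) = -pairP c c := by
        unfold pairP; rw [← Finset.sum_neg_distrib]
        exact Finset.sum_congr rfl (fun p _ => by ring)
      rw [h1]
      have := pairP_self_pos hc
      linarith
  | succ n ih =>
    intro l hl c
    match l with
    | [] => exact ih [] (by simp) c
    | a :: l =>
      have hln : l.length ≤ n := by simpa using hl
      rcases ih l hln c with hc | ⟨y, hy, hcy⟩
      · left
        refine ⟨0, le_rfl, ?_⟩
        have : (fun p => c p - 0 * a p) = c := by funext p; ring
        rw [this]; exact hc
      · by_cases hay : 0 ≤ pairP a y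
        · refine Or.inr ⟨y, fun b hb => ?_, hcy⟩
          rcases List.mem_cons.1 hb with rfl | hb'
          · exact hay
          · exact hy b hb'
        · push_neg at hay
          set g : (P → ℝ) → ℝ := fun b => pairP b y * (pairP a y)⁻¹ with hgdef
          have hg : ∀ (u : P → ℝ) (μ : ℝ) (b : P → ℝ),
              g (fun p => u p - μ * b p) = g u - μ * g b := by
            intro u μ b
            rw [hgdef]; dsimp only
            rw [pairP_sub_mul_left]; ring
          have hproj : ((l.map (fun b => fun p => b p - g b * a p)).length ≤ n) := by
            simpa using hln
          rcases ih _ hproj (fun p => c p - g c * a p) with hc2 | ⟨y', hy', hcy'⟩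
          · left
            have hbl : ∀ b ∈ l, g b ≤ 0 := by
              intro b hb
              rw [hgdef]
              exact mul_nonpos_of_nonneg_of_nonpos (hy b hb) (inv_nonpos.2 hay.le)
            obtain ⟨r, hr, hcone⟩ := inCone_lift a g hg l hbl c hc2
            have hgc : 0 < g c := by
              rw [hgdef]
              exact mul_pos_of_neg_of_neg hcy (inv_neg''.2 hay)
            exact ⟨r, by linarith, hcone⟩
          · right
            set y'' : P → ℝ := fun p => y' p - (pairP a y' * (pairP a y)⁻¹) * y p with hy''def
            have hkey : ∀ u : P → ℝ, pairP u y'' = pairP (fun p => u p - g u * a p) y' := by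
              intro u
              rw [hy''def, pairP_sub_mul_right, pairP_sub_mul_left, hgdef]
              dsimp only
              rw [pairP_comm a y']
              ring
            refine ⟨y'', fun b hb => ?_, ?_⟩
            · rcases List.mem_cons.1 hb with rfl | hb'
              · have hga : g b = 1 := by
                  rw [hgdef]; dsimp only
                  exact mul_inv_cancel₀ (ne_of_lt hay)
                rw [hkey b, pairP_sub_mul_left, hga, one_mul, sub_self]
              · rw [hkey b]
                exact hy' _ (List.mem_map_of_mem hb')
            · rw [hkey c]
              exact hcy'

end Farkas


section Motzkin

variable [Fintype P] [Fintype T]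

lemma pairP_neg (u v : P → ℝ) : pairP (fun p => -(u p)) v = -pairP u v := by
  unfold pairP
  rw [← Finset.sum_neg_distrib]
  exact Finset.sum_congr rfl (fun p _ => by ring)

lemma pairP_sum_mul (x : T → ℝ) (F : T → P → ℝ) (y : P → ℝ) :
    pairP (fun p => ∑ t, x t * F t p) y = ∑ t, x t * pairP (F t) y := by
  unfold pairP
  have h1 : ∀ p : P, (fun p => ∑ t, x t * F t p) p * y p = ∑ t, x t * F t p * y p := by
    intro p; dsimp only; rw [Finset.sum_mul]
  rw [Finset.sum_congr rfl (fun p _ => h1 p), Finset.sum_comm]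
  refine Finset.sum_congr rfl (fun t _ => ?_)
  rw [Finset.mul_sum]
  refine Finset.sum_congr rfl (fun p _ => by ring)

lemma sum_update_mul_gen (x : T → ℝ) (t₀ : T) (v : ℝ) (f : T → ℝ) :
    ∑ t, Function.update x t₀ v t * f t = (∑ t, x t * f t) - x t₀ * f t₀ + v * f t₀ := by
  have : ∀ t, Function.update x t₀ v t * f t
      = x t * f t + (if t = t₀ then v * f t₀ - x t₀ * f t₀ else 0) := by
    intro t
    rcases eq_or_ne t t₀ with rfl | h
    · simp [Function.update_self]
    · simp [Function.update_of_ne h, h]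
  rw [Finset.sum_congr rfl (fun t _ => this t), Finset.sum_add_distrib,
    Finset.sum_ite_eq' Finset.univ t₀ (fun _ => v * f t₀ - x t₀ * f t₀),
    if_pos (Finset.mem_univ _)]
  ring

lemma inCone_iff_coeffs (f : T → P → ℝ) :
    ∀ (L : List T), L.Nodup → ∀ (c : P → ℝ),
      (inCone (L.map f) c ↔ ∃ x : T → ℝ, (∀ t, 0 ≤ x t) ∧ (∀ t, t ∉ L → x t = 0) ∧
        ∀ p, c p = ∑ t, x t * f t p) := by
  intro L
  induction L with
  | nil =>
    intro _ c
    constructor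
    · intro hc
      refine ⟨fun _ => 0, fun t => le_rfl, fun t _ => rfl, fun p => ?_⟩
      have : c = 0 := hc
      rw [this]; simp
    · rintro ⟨x, hnn, hsupp, hsum⟩
      show c = 0
      funext p
      rw [hsum p]
      simp [hsupp]
  | cons t₀ L ih =>
    intro hnd c
    have ht₀L : t₀ ∉ L := (List.nodup_cons.1 hnd).1
    have hndL : L.Nodup := (List.nodup_cons.1 hnd).2
    constructor
    · rintro ⟨μ, hμ, hc⟩
      obtain ⟨x', hnn', hsupp', hsum'⟩ := (ih hndL _).1 hc
      refine ⟨Function.update x' t₀ μ, fun t => ?_, fun t ht => ?_, fun p => ?_⟩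
      · rcases eq_or_ne t t₀ with rfl | h
        · simpa [Function.update_self] using hμ
        · simpa [Function.update_of_ne h] using hnn' t
      · have h1 : t ≠ t₀ := fun he => ht (he ▸ List.mem_cons_self)
        have h2 : t ∉ L := fun he => ht (List.mem_cons_of_mem _ he)
        rw [Function.update_of_ne h1]
        exact hsupp' t h2
      · have h2 : c p - μ * f t₀ p = ∑ t, x' t * f t p := hsum' p
        rw [sum_update_mul_gen x' t₀ μ (fun t => f t p), hsupp' t₀ ht₀L, ← h2]
        ring
    · rintro ⟨x, hnn, hsupp, hsum⟩
      refine ⟨x t₀, hnn t₀, ?_⟩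
      refine (ih hndL _).2 ⟨Function.update x t₀ 0, fun t => ?_, fun t ht => ?_, fun p => ?_⟩
      · rcases eq_or_ne t t₀ with rfl | h
        · simp [Function.update_self]
        · simpa [Function.update_of_ne h] using hnn t
      · rcases eq_or_ne t t₀ with rfl | h
        · simp [Function.update_self]
        · rw [Function.update_of_ne h]
          exact hsupp t (by simp [h, ht])
      · show c p - x t₀ * f t₀ p = ∑ t, Function.update x t₀ 0 t * f t p
        rw [sum_update_mul_gen x t₀ 0 (fun t => f t p), ← hsum p]
        ring

lemma inCone_append : ∀ (l₁ l₂ : List (P → ℝ)) (c : P → ℝ),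
    inCone (l₁ ++ l₂) c ↔ ∃ d : P → ℝ, inCone l₁ d ∧ inCone l₂ (fun p => c p - d p) := by
  intro l₁
  induction l₁ with
  | nil =>
    intro l₂ c
    constructor
    · intro h
      refine ⟨0, rfl, ?_⟩
      have : (fun p => c p - (0:P→ℝ) p) = c := by funext p; simp
      rw [this]; exact h
    · rintro ⟨d, hd, hc⟩
      have hd' : d = 0 := hd
      subst hd'
      have : (fun p => c p - (0:P→ℝ) p) = c := by funext p; simp
      rw [this] at hc; exact hc
  | cons a l₁ ih =>
    intro l₂ c
    constructor
    · rintro ⟨μ, hμ, hc⟩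
      obtain ⟨d, hd1, hd2⟩ := (ih l₂ _).1 hc
      refine ⟨fun p => d p + μ * a p, ⟨μ, hμ, ?_⟩, ?_⟩
      · have : (fun p => (fun p => d p + μ * a p) p - μ * a p) = d := by
          funext p; dsimp only; ring
        rw [this]; exact hd1
      · have : (fun p => c p - (fun p => d p + μ * a p) p)
            = (fun p => (fun p => c p - μ * a p) p - d p) := by
          funext p; dsimp only; ring
        rw [this]; exact hd2
    · rintro ⟨d, ⟨μ, hμ, hd1⟩, hd2⟩
      refine ⟨μ, hμ, (ih l₂ _).2 ⟨fun p => d p - μ * a p, hd1, ?_⟩⟩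
      have : (fun p => (fun p => c p - μ * a p) p - (fun p => d p - μ * a p) p)
          = (fun p => c p - d p) := by
        funext p; dsimp only; ring
      rw [this]; exact hd2

/-- Motzkin-type transposition theorem -/
theorem motzkin (F : T → P → ℝ) (U : Finset T) (Δ : P → ℝ) :
    (∃ x : T → ℝ, (∀ t ∈ U, 0 < x t) ∧ (∀ t ∉ U, x t = 0) ∧ ∀ p, Δ p = ∑ t, x t * F t p)
    ∨ (∃ y : P → ℝ, (∀ t ∈ U, 0 ≤ pairP (F t) y) ∧
        (pairP Δ y < 0 ∨ (pairP Δ y = 0 ∧ ∃ t ∈ U, 0 < pairP (F t) y))) := by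
  classical
  set L := U.toList with hLdef
  have hLnd : L.Nodup := Finset.nodup_toList U
  have hLmem : ∀ t, t ∈ L ↔ t ∈ U := fun t => Finset.mem_toList
  -- a "representation" of Δ
  set Rep : (T → ℝ) → Prop := fun x => (∀ t, 0 ≤ x t) ∧ (∀ t, t ∉ U → x t = 0) ∧
      ∀ p, Δ p = ∑ t, x t * F t p with hRepdef
  have hconeiff : inCone (L.map F) Δ ↔ ∃ x, Rep x := by
    rw [inCone_iff_coeffs F L hLnd Δ]
    constructor
    · rintro ⟨x, h1, h2, h3⟩
      exact ⟨x, h1, fun t ht => h2 t (fun hm => ht ((hLmem t).1 hm)), h3⟩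
    · rintro ⟨x, h1, h2, h3⟩
      exact ⟨x, h1, fun t ht => h2 t (fun hm => ht ((hLmem t).2 hm)), h3⟩
  rcases farkas (L.map F) Δ with hcone | ⟨y, hy, hcy⟩
  swap
  · refine Or.inr ⟨y, fun t ht => ?_, Or.inl hcy⟩
    exact hy (F t) (List.mem_map_of_mem (f := F) ((hLmem t).2 ht))
  · obtain ⟨x₀, hx₀⟩ := hconeiff.1 hcone
    -- maximal support representation
    set S : Set (Set T) := {V | ∃ x, Rep x ∧ {t | 0 < x t} = V} with hSdef
    have hSne : S.Nonempty := ⟨_, x₀, hx₀, rfl⟩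
    have hSfin : S.Finite := Set.toFinite S
    obtain ⟨W, ⟨xb, hxb, hWsupp⟩, hWmax⟩ :=
      Set.Finite.exists_maximalFor id S hSfin hSne
    have hdom : ∀ x, Rep x → ∀ t, 0 < x t → t ∈ W := by
      intro x hx t ht
      set xa : T → ℝ := fun s => (xb s + x s) / 2 with hxa
      have hxaRep : Rep xa := by
        refine ⟨fun s => by have := hxb.1 s; have := hx.1 s; positivity,
          fun s hs => by rw [hxa]; dsimp only; rw [hxb.2.1 s hs, hx.2.1 s hs]; ring,
          fun p => ?_⟩
        have h1 := hxb.2.2 p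
        have h2 := hx.2.2 p
        have : ∀ s : T, xa s * F s p = (xb s * F s p + x s * F s p) / 2 := by
          intro s; rw [hxa]; dsimp only; ring
        rw [Finset.sum_congr rfl (fun s _ => this s), ← Finset.sum_div,
          Finset.sum_add_distrib, ← h1, ← h2]
        ring
      have hsub : W ⊆ {s | 0 < xa s} := by
        intro s hs
        rw [← hWsupp] at hs
        have h1 : 0 < xb s := hs
        have h2 : 0 ≤ x s := hx.1 s
        show 0 < (xb s + x s) / 2
        linarith
      have heq : id W = id {s : T | 0 < xa s} := le_antisymm hsub (hWmax ⟨xa, hxaRep, rfl⟩ hsub)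
      simp only [id] at heq
      have ht' : t ∈ {s : T | 0 < xa s} := by
        have h1 : 0 ≤ xb t := hxb.1 t
        show 0 < (xb t + x t) / 2
        linarith
      rwa [← heq] at ht'
    have hWU : ∀ t ∈ W, t ∈ U := by
      intro t ht
      rw [← hWsupp] at ht
      have ht' : 0 < xb t := ht
      by_contra hU
      rw [hxb.2.1 t hU] at ht'
      exact lt_irrefl 0 ht'
    by_cases hWall : ∀ t ∈ U, t ∈ W
    · left
      refine ⟨xb, fun t ht => ?_, fun t ht => hxb.2.1 t ht, hxb.2.2⟩
      have := hWall t ht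
      rwa [← hWsupp] at this
    · push_neg at hWall
      obtain ⟨t₀, ht₀U, ht₀W⟩ := hWall
      have hxbt₀ : xb t₀ = 0 := by
        by_contra h
        exact ht₀W (hdom xb hxb t₀ (lt_of_le_of_ne (hxb.1 t₀) (Ne.symm h)))
      set W' : Finset T := U.filter (fun t => 0 < xb t) with hW'def
      have hW'iff : ∀ t, t ∈ W' ↔ 0 < xb t := by
        intro t
        rw [hW'def, Finset.mem_filter]
        constructor
        · rintro ⟨_, h⟩; exact h
        · intro h
          refine ⟨?_, h⟩
          by_contra hU
          rw [hxb.2.1 t hU] at h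
          exact lt_irrefl 0 h
      set l₂ : List (P → ℝ) := L.map F ++ (W'.toList.map (fun t => fun p => -(F t p)))
        with hl₂def
      rcases farkas l₂ (fun p => -(F t₀ p)) with hc2 | ⟨y, hy, hcy⟩
      · -- derive a contradiction with the maximality of W
        exfalso
        rw [hl₂def, inCone_append] at hc2
        obtain ⟨d, hd1, hd2⟩ := hc2
        obtain ⟨lam, hlnn, hlsupp, hlsum⟩ := (inCone_iff_coeffs F L hLnd d).1 hd1
        obtain ⟨nu, hnnn, hnsupp, hnsum⟩ :=
          (inCone_iff_coeffs (fun t => fun p => -(F t p)) W'.toList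
            (Finset.nodup_toList W') _).1 hd2
        have hkey : ∀ p, ∑ t, nu t * F t p = F t₀ p + ∑ t, lam t * F t p := by
          intro p
          have h1 : -(F t₀ p) - d p = ∑ t, nu t * -(F t p) := hnsum p
          have h2 : ∑ t, nu t * -(F t p) = -∑ t, nu t * F t p := by
            rw [← Finset.sum_neg_distrib]
            exact Finset.sum_congr rfl (fun t _ => by ring)
          rw [h2] at h1
          have h3 : d p = ∑ t, lam t * F t p := hlsum p
          linarith
        set eps : ℝ := (W'.image (fun t => xb t / (nu t + 1))).fold min 1 id with hepsdef
        have hepspos : 0 < eps := by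
          rw [hepsdef, Finset.lt_fold_min]
          refine ⟨one_pos, ?_⟩
          intro v hv
          obtain ⟨t, ht, rfl⟩ := Finset.mem_image.1 hv
          have h1 : 0 < xb t := (hW'iff t).1 ht
          have h2 : 0 ≤ nu t := hnnn t
          show (0:ℝ) < xb t / (nu t + 1)
          positivity
        have hepsle : ∀ t ∈ W', eps * nu t < xb t := by
          intro t ht
          have h1 : 0 < xb t := (hW'iff t).1 ht
          have h2 : 0 ≤ nu t := hnnn t
          have h3 : eps ≤ xb t / (nu t + 1) := by
            rw [hepsdef]
            exact (Finset.fold_min_le _).2 (Or.inr ⟨_, Finset.mem_image_of_mem _ ht, le_rfl⟩)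
          have h4 : eps * nu t ≤ (xb t / (nu t + 1)) * nu t :=
            mul_le_mul_of_nonneg_right h3 h2
          have h5 : (xb t / (nu t + 1)) * nu t < xb t := by
            rw [div_mul_eq_mul_div, div_lt_iff₀ (by linarith)]
            nlinarith
          linarith
        set xnew : T → ℝ :=
          fun t => xb t + eps * (lam t + (if t = t₀ then 1 else 0)) - eps * nu t
          with hxnewdef
        have hnusupp : ∀ t, t ∉ W' → nu t = 0 := by
          intro t ht
          exact hnsupp t (fun hm => ht (Finset.mem_toList.1 hm))
        have hxnewnn : ∀ t, 0 ≤ xnew t := by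
          intro t
          rw [hxnewdef]; dsimp only
          have h1 : 0 ≤ lam t := hlnn t
          have h2 : 0 ≤ xb t := hxb.1 t
          by_cases hw : t ∈ W'
          · have := hepsle t hw
            split <;> nlinarith
          · rw [hnusupp t hw]
            split <;> nlinarith [hepspos]
        have hxnewRep : Rep xnew := by
          refine ⟨hxnewnn, fun t ht => ?_, fun p => ?_⟩
          · have h1 : xb t = 0 := hxb.2.1 t ht
            have h2 : lam t = 0 := hlsupp t (fun hm => ht ((hLmem t).1 hm))
            have h3 : nu t = 0 := hnusupp t
              (fun hm => ht (Finset.mem_filter.1 hm).1)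
            have h4 : t ≠ t₀ := fun he => ht (he ▸ ht₀U)
            rw [hxnewdef]; dsimp only
            rw [h1, h2, h3, if_neg h4]; ring
          · have expand : ∀ t, xnew t * F t p = xb t * F t p + eps * (lam t * F t p)
                + eps * ((if t = t₀ then (1:ℝ) else 0) * F t p) - eps * (nu t * F t p) := by
              intro t; rw [hxnewdef]; dsimp only; split <;> ring
            rw [Finset.sum_congr rfl (fun t _ => expand t), Finset.sum_sub_distrib,
              Finset.sum_add_distrib, Finset.sum_add_distrib,
              ← Finset.mul_sum, ← Finset.mul_sum, ← Finset.mul_sum]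
            have hite : ∑ t, (if t = t₀ then (1:ℝ) else 0) * F t p = F t₀ p := by
              have : ∀ t, (if t = t₀ then (1:ℝ) else 0) * F t p
                  = (if t = t₀ then F t₀ p else 0) := by
                intro t; split
                · rename_i h; rw [h]; ring
                · ring
              rw [Finset.sum_congr rfl (fun t _ => this t),
                Finset.sum_ite_eq' Finset.univ t₀ (fun _ => F t₀ p),
                if_pos (Finset.mem_univ _)]
            rw [hite]
            have h1 := hkey p
            have h2 := hxb.2.2 p
            rw [h2, h1]; ring
        have hxt₀pos : 0 < xnew t₀ := by
          rw [hxnewdef]; dsimp only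
          rw [hxbt₀, if_pos rfl]
          have hnu : nu t₀ = 0 := by
            refine hnusupp t₀ (fun hm => ?_)
            rw [(hW'iff t₀), hxbt₀] at hm
            exact lt_irrefl 0 hm
          have hl : 0 ≤ lam t₀ := hlnn t₀
          rw [hnu]
          nlinarith [hepspos]
        exact ht₀W (hdom xnew hxnewRep t₀ hxt₀pos)
      · -- second disjunct
        refine Or.inr ⟨y, fun t ht => ?_, Or.inr ⟨?_, t₀, ht₀U, ?_⟩⟩
        · exact hy (F t) (by
            rw [hl₂def]
            exact List.mem_append_left _ (List.mem_map_of_mem (f := F) ((hLmem t).2 ht)))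
        · have hzero : ∀ t, 0 < xb t → pairP (F t) y = 0 := by
            intro t ht
            have hUt : t ∈ U := by
              by_contra h
              rw [hxb.2.1 t h] at ht
              exact lt_irrefl 0 ht
            have h1 : 0 ≤ pairP (F t) y := hy (F t) (by
              rw [hl₂def]
              exact List.mem_append_left _ (List.mem_map_of_mem (f := F) ((hLmem t).2 hUt)))
            have h2 : 0 ≤ pairP (fun p => -(F t p)) y := hy _ (by
              rw [hl₂def]
              exact List.mem_append_right _
                (List.mem_map_of_mem (Finset.mem_toList.2 ((hW'iff t).2 ht))))
            rw [pairP_neg] at h2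
            linarith
          have hΔ : pairP Δ y = ∑ t, xb t * pairP (F t) y := by
            have hΔeq : Δ = fun p => ∑ t, xb t * F t p := funext (fun p => hxb.2.2 p)
            rw [hΔeq, pairP_sum_mul]
          rw [hΔ]
          refine Finset.sum_eq_zero (fun t _ => ?_)
          rcases eq_or_lt_of_le (hxb.1 t) with hz | hpos
          · rw [← hz]; ring
          · rw [hzero t hpos]; ring
        · have : pairP (fun p => -(F t₀ p)) y < 0 := hcy
          rw [pairP_neg] at this
          linarith

end Motzkin


section Nets

variable [Fintype P] [Fintype T] {N : PetriNet P T}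

lemma pre_eq_zero_iff {t : T} {p : P} : N.pre t p = 0 ↔ N.Fminus p t = 0 := by
  unfold PetriNet.pre; exact_mod_cast Nat.cast_eq_zero
lemma pre_pos_iff {t : T} {p : P} : 0 < N.pre t p ↔ 0 < N.Fminus p t := by
  unfold PetriNet.pre; exact_mod_cast Nat.cast_pos
lemma post_pos_iff {t : T} {p : P} : 0 < N.post t p ↔ 0 < N.Fplus p t := by
  unfold PetriNet.post; exact_mod_cast Nat.cast_pos

/-- existence of a maximal run from `m0` with support inside `U` -/
lemma exists_maximal_run (N : PetriNet P T) (U : Set T) (m0 : P → ℝ)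
    (h0 : ∀ p, 0 ≤ m0 p) :
    ∃ (W : Set T) (σ : List (ℝ × T)) (mW : P → ℝ),
      N.fireSeq σ m0 mW ∧ seqSupport σ = W ∧ W ⊆ U ∧
      (∀ (σ' : List (ℝ × T)) (m' : P → ℝ), N.fireSeq σ' m0 m' → seqSupport σ' ⊆ U →
        seqSupport σ' ⊆ W ∧ ∀ p, 0 < m' p → 0 < mW p) := by
  classical
  set Ach : Set (Set T × Set P) := {q | ∃ (σ : List (ℝ × T)) (m' : P → ℝ), N.fireSeq σ m0 m' ∧
      seqSupport σ = q.1 ∧ q.1 ⊆ U ∧ {p | 0 < m' p} = q.2} with hAch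
  have hne : Ach.Nonempty :=
    ⟨(∅, {p | 0 < m0 p}), [], m0, rfl, seqSupport_nil, Set.empty_subset _, rfl⟩
  obtain ⟨⟨W, A⟩, ⟨σ, mW, hσ, hsupp, hWU, hA⟩, hmax⟩ :=
    Set.Finite.exists_maximalFor id Ach (Set.toFinite _) hne
  dsimp only at hsupp hWU hA
  refine ⟨W, σ, mW, hσ, hsupp, hWU, ?_⟩
  intro σ' m' hσ' hsub
  have hm' : ∀ p, 0 ≤ m' p := fireSeq_nonneg hσ' h0
  have hmW : ∀ p, 0 ≤ mW p := fireSeq_nonneg hσ h0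
  have hcomb := fireSeq_combine h0 hσ hσ'
  have hAiff : ∀ p, p ∈ A ↔ 0 < mW p := by
    intro p; rw [← hA]; exact Iff.rfl
  have hmarked0 : ∀ p, 0 < (mW p + m' p) / 2 ↔ (0 < mW p ∨ 0 < m' p) := by
    intro p
    have h1 := hmW p
    have h2 := hm' p
    constructor
    · intro h
      by_contra hc
      push_neg at hc
      have := hc.1
      have := hc.2
      linarith
    · rintro (h | h) <;> linarith
  have hmarked : {p | 0 < (fun p => (mW p + m' p) / 2) p}
      = A ∪ {p | 0 < m' p} := by
    ext p
    constructor
    · intro h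
      rcases (hmarked0 p).1 h with h1 | h1
      · exact Or.inl ((hAiff p).2 h1)
      · exact Or.inr h1
    · rintro (h | h)
      · exact (hmarked0 p).2 (Or.inl ((hAiff p).1 h))
      · exact (hmarked0 p).2 (Or.inr h)
  have hachnew : (W ∪ seqSupport σ', A ∪ {p | 0 < m' p}) ∈ Ach := by
    refine ⟨_, _, hcomb, ?_, ?_, hmarked⟩
    · rw [seqSupport_append, seqSupport_scaleSeq, seqSupport_scaleSeq, hsupp]
    · exact Set.union_subset hWU hsub
  have hle : (W, A) ≤ (W ∪ seqSupport σ', A ∪ {p | 0 < m' p}) :=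
    ⟨Set.subset_union_left, Set.subset_union_left⟩
  have heq : id (W, A) = id (W ∪ seqSupport σ', A ∪ {p | 0 < m' p}) := le_antisymm hle (hmax hachnew hle)
  simp only [id] at heq
  have hW : W ∪ seqSupport σ' = W := (congrArg Prod.fst heq).symm
  have hA2 : A ∪ {p | 0 < m' p} = A := (congrArg Prod.snd heq).symm
  constructor
  · rw [← hW]; exact Set.subset_union_right
  · intro p hp
    have : p ∈ A := hA2 ▸ Set.mem_union_right A hp
    rw [← hA] at this
    exact this

/-- find a small enough firing amount for a transition whose unmarked pre-places vanish -/
lemma exists_fire_amount (N : PetriNet P T) (t : T) (m : P → ℝ) (hm : ∀ p, 0 ≤ m p)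
    (h : ∀ p, 0 < N.Fminus p t → 0 < m p) :
    ∃ α : ℝ, 0 < α ∧ ∀ p, α * N.pre t p ≤ m p := by
  classical
  set s := (Finset.univ.filter (fun p => 0 < N.Fminus p t)).image
    (fun p => m p / N.pre t p) with hs
  refine ⟨s.fold min 1 id, ?_, ?_⟩
  · rw [Finset.lt_fold_min]
    refine ⟨one_pos, fun v hv => ?_⟩
    obtain ⟨p, hp, rfl⟩ := Finset.mem_image.1 hv
    have h1 : 0 < N.Fminus p t := (Finset.mem_filter.1 hp).2
    have h2 : 0 < m p := h p h1
    have h3 : 0 < N.pre t p := pre_pos_iff.2 h1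
    show (0:ℝ) < m p / N.pre t p
    positivity
  · intro p
    by_cases hp : 0 < N.Fminus p t
    · have h3 : 0 < N.pre t p := pre_pos_iff.2 hp
      have h4 : s.fold min 1 id ≤ m p / N.pre t p := by
        refine (Finset.fold_min_le _).2 (Or.inr ⟨_, ?_, le_rfl⟩)
        exact Finset.mem_image_of_mem _ (Finset.mem_filter.2 ⟨Finset.mem_univ _, hp⟩)
      calc s.fold min 1 id * N.pre t p ≤ (m p / N.pre t p) * N.pre t p :=
            mul_le_mul_of_nonneg_right h4 h3.le
        _ = m p := by field_simp
    · have h3 : N.pre t p = 0 := pre_eq_zero_iff.2 (by omega)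
      rw [h3, mul_zero]
      exact hm p

/-- existence of a run with support exactly `U` marking all places touched by `U`,
assuming no siphon-certificate -/
lemma good_run (N : PetriNet P T) (U : Set T) (m0 : P → ℝ) (h0 : ∀ p, 0 ≤ m0 p)
    (hcert : ¬ ∃ Q : Finset P, preSetOn N U Q ⊆ postSetOn N U Q ∧
      (postSetOn N U Q).Nonempty ∧ ∑ p ∈ Q, m0 p = 0) :
    ∃ (σ : List (ℝ × T)) (mW : P → ℝ), N.fireSeq σ m0 mW ∧ seqSupport σ = U ∧
      ∀ p, (∃ t ∈ U, 0 < N.Fminus p t ∨ 0 < N.Fplus p t) → 0 < mW p := by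
  classical
  obtain ⟨W, σ, mW, hσ, hsupp, hWU, hdom⟩ := exists_maximal_run N U m0 h0
  have hmW : ∀ p, 0 ≤ mW p := fireSeq_nonneg hσ h0
  set Q : Finset P := Finset.univ.filter (fun p => ¬ 0 < mW p) with hQ
  have hQmem : ∀ p, p ∈ Q ↔ mW p = 0 := by
    intro p
    rw [hQ, Finset.mem_filter]
    constructor
    · rintro ⟨_, h⟩; exact le_antisymm (not_lt.1 h) (hmW p)
    · intro h; exact ⟨Finset.mem_univ _, by rw [h]; exact lt_irrefl 0⟩
  -- if a transition of U has no unmarked pre-place, it is in W and marks its post-places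
  have habil : ∀ t ∈ U, (∀ p, mW p = 0 → N.Fminus p t = 0) →
      t ∈ W ∧ ∀ p, 0 < N.Fplus p t → 0 < mW p := by
    intro t htU hpre
    have hfireable : ∃ α : ℝ, 0 < α ∧ ∀ p, α * N.pre t p ≤ mW p := by
      refine exists_fire_amount N t mW hmW (fun p hp => ?_)
      rcases eq_or_lt_of_le (hmW p) with hz | hpos
      · rw [hpre p hz.symm] at hp; exact absurd hp (lt_irrefl 0)
      · exact hpos
    obtain ⟨α, hα, hle⟩ := hfireable
    set m' : P → ℝ := fun p => mW p + α * (N.post t p - N.pre t p) with hm'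
    have hfire : N.fire t α mW m' := ⟨hα, hle, fun p => rfl⟩
    have hrun : N.fireSeq (σ ++ [(α, t)]) m0 m' := by
      rw [fireSeq_append]
      exact ⟨mW, hσ, m', hfire, rfl⟩
    have hsupp' : seqSupport (σ ++ [(α, t)]) = W ∪ {t} := by
      rw [seqSupport_append, hsupp, seqSupport_cons, seqSupport_nil]
      simp [Set.union_comm]
    have hd := hdom _ _ hrun (by
      rw [hsupp']
      exact Set.union_subset hWU (by simpa using htU))
    constructor
    · have := hd.1
      rw [hsupp'] at this
      exact this (Set.mem_union_right _ rfl)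
    · intro p hp
      rcases eq_or_lt_of_le (hmW p) with hz | hpos
      · -- p unmarked: after firing it becomes marked, contradiction unless already in W
        have h1 : N.Fminus p t = 0 := hpre p hz.symm
        have h2 : 0 < m' p := by
          rw [hm']
          dsimp only
          rw [← hz]
          have h3 : N.pre t p = 0 := pre_eq_zero_iff.2 h1
          rw [h3]
          have h4 : 0 < N.post t p := post_pos_iff.2 hp
          nlinarith
        exact hd.2 p h2
      · exact hpos
  -- the siphon condition always holds for Q
  have hsiphon : preSetOn N U Q ⊆ postSetOn N U Q := by
    intro t ht
    obtain ⟨htU, p₁, hp₁Q, hp₁⟩ := ht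
    by_contra hpost
    have hnopre : ∀ p, mW p = 0 → N.Fminus p t = 0 := by
      intro p hpz
      by_contra hc
      exact hpost ⟨htU, p, (hQmem p).2 hpz, by omega⟩
    have := (habil t htU hnopre).2 p₁ hp₁
    rw [(hQmem p₁).1 hp₁Q] at this
    exact absurd this (lt_irrefl 0)
  have hsum : ∑ p ∈ Q, m0 p = 0 := by
    refine Finset.sum_eq_zero (fun p hp => ?_)
    by_contra hc
    have h1 : 0 < m0 p := lt_of_le_of_ne (h0 p) (Ne.symm hc)
    have h2 := (hdom [] m0 rfl (by rw [seqSupport_nil]; exact Set.empty_subset _)).2 p h1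
    rw [(hQmem p).1 hp] at h2
    exact absurd h2 (lt_irrefl 0)
  have hempty : ¬ (postSetOn N U Q).Nonempty := by
    intro hne
    exact hcert ⟨Q, hsiphon, hne, hsum⟩
  -- hence every transition of U is enabled-compatible
  have hall : ∀ t ∈ U, t ∈ W ∧ ∀ p, 0 < N.Fplus p t → 0 < mW p := by
    intro t htU
    refine habil t htU (fun p hpz => ?_)
    by_contra hc
    exact hempty ⟨t, htU, p, (hQmem p).2 hpz, by omega⟩
  have hWeq : W = U := by
    refine Set.Subset.antisymm hWU (fun t ht => (hall t ht).1)
  refine ⟨σ, mW, hσ, by rw [hsupp, hWeq], ?_⟩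
  rintro p ⟨t, htU, hp | hp⟩
  · -- pre-place of t: it cannot be unmarked since postSetOn Q is empty
    by_contra hc
    have hpz : mW p = 0 := le_antisymm (not_lt.1 hc) (hmW p)
    exact hempty ⟨t, htU, p, (hQmem p).2 hpz, by omega⟩
  · exact (hall t htU).2 p hp


lemma siphon_invariant {U : Set T} (Q : Finset P) (hQ : preSetOn N U Q ⊆ postSetOn N U Q) :
    ∀ σ : List (ℝ × T), seqSupport σ ⊆ U → ∀ m m' : P → ℝ, N.fireSeq σ m m' →
      (∀ p, 0 ≤ m p) → (∀ p ∈ Q, m p = 0) → (∀ p ∈ Q, m' p = 0) := by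
  intro σ
  induction σ with
  | nil =>
    intro _ m m' h _ hz
    cases h; exact hz
  | cons a σ ih =>
    obtain ⟨α, t⟩ := a
    intro hsub m m' h hm hz
    obtain ⟨m₁, hf, hs⟩ := h
    have htU : t ∈ U := hsub ⟨α, List.mem_cons_self⟩
    have hpre : ∀ p ∈ Q, N.Fminus p t = 0 := by
      intro p hp
      have h1 := hf.2.1 p
      rw [hz p hp] at h1
      have h2 : 0 ≤ N.pre t p := pre_nonneg N t p
      have h3 : 0 < α := hf.1
      have h4 : N.pre t p = 0 := by nlinarith
      exact pre_eq_zero_iff.1 h4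
    have hpost : ∀ p ∈ Q, N.Fplus p t = 0 := by
      intro p hp
      by_contra hc
      have h1 : t ∈ preSetOn N U Q := ⟨htU, p, hp, by omega⟩
      obtain ⟨_, p', hp', hpos⟩ := hQ h1
      rw [hpre p' hp'] at hpos
      exact absurd hpos (lt_irrefl 0)
    have hz₁ : ∀ p ∈ Q, m₁ p = 0 := by
      intro p hp
      rw [hf.2.2 p, hz p hp]
      have h1 : N.pre t p = 0 := pre_eq_zero_iff.2 (hpre p hp)
      have h2 : N.post t p = 0 := by
        unfold PetriNet.post
        rw [hpost p hp]
        exact Nat.cast_zero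
      rw [h1, h2]
      ring
    exact ih (fun s hs' => hsub (by
      obtain ⟨β, hb⟩ := hs'
      exact ⟨β, List.mem_cons_of_mem _ hb⟩)) m₁ m' hs (fire_nonneg hf hm) hz₁

lemma siphon_sound {U : Set T} {m0 m1 : P → ℝ} (h0 : ∀ p, 0 ≤ m0 p)
    (Q : Finset P) (hQ : preSetOn N U Q ⊆ postSetOn N U Q)
    (hne : (postSetOn N U Q).Nonempty) (hsum : ∑ p ∈ Q, m0 p = 0)
    (hreach : N.reachSupp U m0 m1) : False := by
  obtain ⟨σ, hσ, hsupp⟩ := hreach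
  have hz : ∀ p ∈ Q, m0 p = 0 := by
    intro p hp
    exact (Finset.sum_eq_zero_iff_of_nonneg (fun q _ => h0 q)).1 hsum p hp
  obtain ⟨t₀, ht₀U, p₀, hp₀Q, hp₀⟩ := hne
  have ht₀supp : t₀ ∈ seqSupport σ := by rw [hsupp]; exact ht₀U
  obtain ⟨α, hmem⟩ := ht₀supp
  obtain ⟨σa, σb, ma, mb, hdecomp, ha, hfire, hb⟩ := fireSeq_split hσ hmem
  have hsuba : seqSupport σa ⊆ U := by
    intro s hs
    rw [← hsupp, hdecomp, seqSupport_append]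
    exact Set.mem_union_left _ hs
  have hza : ∀ p ∈ Q, ma p = 0 := siphon_invariant Q hQ σa hsuba m0 ma ha h0 hz
  have h1 := hfire.2.1 p₀
  rw [hza p₀ hp₀Q] at h1
  have h2 : 0 < N.pre t₀ p₀ := pre_pos_iff.2 hp₀
  have h3 : 0 < α := hfire.1
  nlinarith

lemma exclusion_sound {U : Set T} {msrc mtgt : P → ℝ} (f : (P → ℝ) → ℝ)
    (hf : N.IsExclusionFun U U msrc mtgt f) (hreach : N.reachSupp U msrc mtgt) : False := by
  obtain ⟨σ, hσ, hsupp⟩ := hreach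
  obtain ⟨hmono, hdec⟩ := hf
  have hmono' : ∀ t ∈ seqSupport σ, ∀ α (m₁ m₂ : P → ℝ), N.fire t α m₁ m₂ → f m₁ ≤ f m₂ := by
    intro t ht α m₁ m₂ hfi
    exact hmono t (hsupp ▸ ht) α m₁ m₂ hfi
  have hle : f msrc ≤ f mtgt := fireSeq_mono f hmono' hσ
  rcases hdec with h | ⟨heq, t, htU, hstrict⟩
  · linarith
  · have htsupp : t ∈ seqSupport σ := by rw [hsupp]; exact htU
    obtain ⟨α, hmem⟩ := htsupp
    obtain ⟨σa, σb, ma, mb, hdecomp, ha, hfire, hb⟩ := fireSeq_split hσ hmem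
    have hsuppab := hdecomp ▸ hsupp
    have h1 : f msrc ≤ f ma := by
      refine fireSeq_mono f (fun s hs α' m₁ m₂ hfi => hmono' s ?_ α' m₁ m₂ hfi) ha
      rw [hdecomp, seqSupport_append]
      exact Set.mem_union_left _ hs
    have h2 : f ma < f mb := hstrict α ma mb hfire
    have h3 : f mb ≤ f mtgt := by
      refine fireSeq_mono f (fun s hs α' m₁ m₂ hfi => hmono' s ?_ α' m₁ m₂ hfi) hb
      rw [hdecomp, seqSupport_append, seqSupport_cons]
      exact Set.mem_union_right _ (Set.mem_insert_iff.2 (Or.inr hs))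
    rw [heq] at *
    linarith

lemma exclusion_of_y {U : Set T} {msrc mtgt : P → ℝ} (y : P → ℝ)
    (h1 : ∀ t ∈ U, 0 ≤ pairP (fun p => N.post t p - N.pre t p) y)
    (h2 : pairP (fun p => mtgt p - msrc p) y < 0 ∨
      (pairP (fun p => mtgt p - msrc p) y = 0 ∧
        ∃ t ∈ U, 0 < pairP (fun p => N.post t p - N.pre t p) y)) :
    N.IsExclusionFun U U msrc mtgt (fun m => ∑ p, y p * m p) := by
  have hdiff : ∀ (t : T) (α : ℝ) (m m' : P → ℝ), N.fire t α m m' →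
      (∑ p, y p * m' p) = (∑ p, y p * m p)
        + α * pairP (fun p => N.post t p - N.pre t p) y := by
    intro t α m m' hfi
    unfold pairP
    rw [Finset.mul_sum, ← Finset.sum_add_distrib]
    refine Finset.sum_congr rfl (fun p _ => ?_)
    rw [hfi.2.2 p]
    dsimp only
    ring
  have hΔ : pairP (fun p => mtgt p - msrc p) y
      = (∑ p, y p * mtgt p) - (∑ p, y p * msrc p) := by
    unfold pairP
    rw [← Finset.sum_sub_distrib]
    refine Finset.sum_congr rfl (fun p _ => ?_)
    dsimp only
    ring
  constructor
  · intro t ht α m m' hfi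
    dsimp only
    rw [hdiff t α m m' hfi]
    have := h1 t ht
    have := hfi.1
    nlinarith
  · rcases h2 with h | ⟨heq, t, htU, hpos⟩
    · left
      rw [hΔ] at h
      dsimp only
      linarith
    · right
      refine ⟨?_, t, htU, ?_⟩
      · rw [hΔ] at heq
        dsimp only
        linarith
      · intro α m m' hfi
        dsimp only
        rw [hdiff t α m m' hfi]
        have := hfi.1
        nlinarith

end Nets


section Main

variable [Fintype P] [Fintype T]

lemma transpose_transpose (N : PetriNet P T) : N.transpose.transpose = N := rfl

lemma reach_of_no_cert (N : PetriNet P T) (U : Set T) (msrc mtgt : P → ℝ)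
    (hsrc : ∀ p, 0 ≤ msrc p) (htgt : ∀ p, 0 ≤ mtgt p)
    (hy : ¬ ∃ y : P → ℝ, N.IsExclusionFun U U msrc mtgt (fun m => ∑ p, y p * m p))
    (hQ : ¬ ∃ Q : Finset P, preSetOn N U Q ⊆ postSetOn N U Q ∧
      (postSetOn N U Q).Nonempty ∧ ∑ p ∈ Q, msrc p = 0)
    (hR : ¬ ∃ R : Finset P, postSetOn N U R ⊆ preSetOn N U R ∧
      (preSetOn N U R).Nonempty ∧ ∑ p ∈ R, mtgt p = 0) :
    N.reachSupp U msrc mtgt := by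
  classical
  obtain ⟨σ₁, mt1, hσ₁, hsupp₁, hmark₁⟩ := good_run N U msrc hsrc hQ
  have hQ' : ¬ ∃ Q : Finset P, preSetOn N.transpose U Q ⊆ postSetOn N.transpose U Q ∧
      (postSetOn N.transpose U Q).Nonempty ∧ ∑ p ∈ Q, mtgt p = 0 := by
    rintro ⟨R, h1, h2, h3⟩
    exact hR ⟨R, h1, h2, h3⟩
  obtain ⟨σ₂, mt2, hσ₂, hsupp₂, hmark₂⟩ := good_run N.transpose U mtgt htgt hQ'
  set Fc : T → P → ℝ := fun t p => N.post t p - N.pre t p with hFc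
  set U' : Finset T := Finset.univ.filter (fun t => t ∈ U) with hU'
  have hU'mem : ∀ t, t ∈ U' ↔ t ∈ U := by
    intro t; rw [hU', Finset.mem_filter]; simp
  rcases motzkin Fc U' (fun p => mtgt p - msrc p) with ⟨x, hx1, hx2, hx3⟩ | ⟨y, hy1, hy2⟩
  swap
  · exfalso
    apply hy
    refine ⟨y, exclusion_of_y y (fun t ht => hy1 t ((hU'mem t).2 ht)) ?_⟩
    rcases hy2 with h | ⟨h, t, ht, hpos⟩
    · exact Or.inl h
    · exact Or.inr ⟨h, t, (hU'mem t).1 ht, hpos⟩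
  · set π₁ := parikh σ₁ with hπ₁
    set π₂ := parikh σ₂ with hπ₂
    have hπ₁nn : ∀ t, 0 ≤ π₁ t :=
      parikh_nonneg (fun β t hm => fireSeq_pos_amounts hσ₁ hm)
    have hπ₂nn : ∀ t, 0 ≤ π₂ t :=
      parikh_nonneg (fun β t hm => fireSeq_pos_amounts hσ₂ hm)
    have hπ₁z : ∀ t, t ∉ U → π₁ t = 0 := by
      intro t ht
      exact parikh_eq_zero (by rw [hsupp₁]; exact ht)
    have hπ₂z : ∀ t, t ∉ U → π₂ t = 0 := by
      intro t ht
      exact parikh_eq_zero (by rw [hsupp₂]; exact ht)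
    have hxU : ∀ t, t ∉ U → x t = 0 := by
      intro t ht
      exact hx2 t (fun hm => ht ((hU'mem t).1 hm))
    set lam : ℝ := (U'.image (fun t => x t / (π₁ t + π₂ t + 1))).fold min 1 id with hlam
    have hlampos : 0 < lam := by
      rw [hlam, Finset.lt_fold_min]
      refine ⟨one_pos, fun v hv => ?_⟩
      obtain ⟨t, ht, rfl⟩ := Finset.mem_image.1 hv
      have h1 : 0 < x t := hx1 t ht
      have h2 : 0 ≤ π₁ t := hπ₁nn t
      have h3 : 0 ≤ π₂ t := hπ₂nn t
      show (0:ℝ) < x t / (π₁ t + π₂ t + 1)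
      positivity
    have hlamle1 : lam ≤ 1 := by
      rw [hlam]
      exact (Finset.fold_min_le _).2 (Or.inl le_rfl)
    have hlamlt : ∀ t ∈ U, lam * (π₁ t + π₂ t) < x t := by
      intro t htU
      have h1 : 0 < x t := hx1 t ((hU'mem t).2 htU)
      have h2 : 0 ≤ π₁ t := hπ₁nn t
      have h3 : 0 ≤ π₂ t := hπ₂nn t
      have h4 : lam ≤ x t / (π₁ t + π₂ t + 1) := by
        rw [hlam]
        exact (Finset.fold_min_le _).2
          (Or.inr ⟨_, Finset.mem_image_of_mem _ ((hU'mem t).2 htU), le_rfl⟩)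
      have h5 : lam * (π₁ t + π₂ t) ≤ (x t / (π₁ t + π₂ t + 1)) * (π₁ t + π₂ t) :=
        mul_le_mul_of_nonneg_right h4 (by linarith)
      have h6 : (x t / (π₁ t + π₂ t + 1)) * (π₁ t + π₂ t) < x t := by
        rw [div_mul_eq_mul_div, div_lt_iff₀ (by linarith)]
        nlinarith
      linarith
    set x' : T → ℝ := fun t => x t - lam * (π₁ t + π₂ t) with hx'
    have hx'nn : ∀ t, 0 ≤ x' t := by
      intro t
      rw [hx']; dsimp only
      by_cases htU : t ∈ U
      · have := hlamlt t htU; linarith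
      · rw [hxU t htU, hπ₁z t htU, hπ₂z t htU]; ring_nf; exact le_rfl
    have hx'posU : ∀ t, 0 < x' t ↔ t ∈ U := by
      intro t
      constructor
      · intro h
        by_contra htU
        rw [hx'] at h; dsimp only at h
        rw [hxU t htU, hπ₁z t htU, hπ₂z t htU] at h
        norm_num at h
      · intro htU
        rw [hx']; dsimp only
        have := hlamlt t htU
        linarith
    set m1 : P → ℝ := fun p => (1 - lam) * msrc p + lam * mt1 p with hm1
    set m2 : P → ℝ := fun p => (1 - lam) * mtgt p + lam * mt2 p with hm2
    have hmt1nn : ∀ p, 0 ≤ mt1 p := fireSeq_nonneg hσ₁ hsrc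
    have hmt2nn : ∀ p, 0 ≤ mt2 p := fireSeq_nonneg hσ₂ htgt
    have hrun1 : N.fireSeq (scaleSeq lam σ₁) msrc m1 := by
      have h1 := fireSeq_scale hlampos hσ₁
      have h2 := fireSeq_shift (v := fun p => (1 - lam) * msrc p)
        (fun p => by have := hsrc p; show 0 ≤ (1 - lam) * msrc p; nlinarith [hlamle1]) h1
      have e1 : (fun p => (fun p => lam * msrc p) p + (fun p => (1 - lam) * msrc p) p)
          = msrc := funext fun p => by
        show lam * msrc p + (1 - lam) * msrc p = msrc p; ring
      have e2 : (fun p => (fun p => lam * mt1 p) p + (fun p => (1 - lam) * msrc p) p)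
          = m1 := funext fun p => by
        show lam * mt1 p + (1 - lam) * msrc p = (1 - lam) * msrc p + lam * mt1 p; ring
      rw [e1, e2] at h2
      exact h2
    have hrun2T : N.transpose.fireSeq (scaleSeq lam σ₂) mtgt m2 := by
      have h1 := fireSeq_scale hlampos hσ₂
      have h2 := fireSeq_shift (v := fun p => (1 - lam) * mtgt p)
        (fun p => by have := htgt p; show 0 ≤ (1 - lam) * mtgt p; nlinarith [hlamle1]) h1
      have e1 : (fun p => (fun p => lam * mtgt p) p + (fun p => (1 - lam) * mtgt p) p)
          = mtgt := funext fun p => by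
        show lam * mtgt p + (1 - lam) * mtgt p = mtgt p; ring
      have e2 : (fun p => (fun p => lam * mt2 p) p + (fun p => (1 - lam) * mtgt p) p)
          = m2 := funext fun p => by
        show lam * mt2 p + (1 - lam) * mtgt p = (1 - lam) * mtgt p + lam * mt2 p; ring
      rw [e1, e2] at h2
      exact h2
    have hrun3 : N.fireSeq (scaleSeq lam σ₂).reverse m2 mtgt := fireSeq_reverse hrun2T
    have hpar₁ : ∀ p, mt1 p = msrc p + ∑ t, π₁ t * Fc t p := fireSeq_parikh hσ₁
    have hpar₂ : ∀ p, mt2 p = mtgt p - ∑ t, π₂ t * Fc t p := by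
      intro p
      have h1 := fireSeq_parikh hσ₂ p
      rw [h1]
      have : ∀ t : T, π₂ t * (N.transpose.post t p - N.transpose.pre t p)
          = -(π₂ t * Fc t p) := by
        intro t
        show π₂ t * (N.pre t p - N.post t p) = -(π₂ t * (N.post t p - N.pre t p))
        ring
      rw [Finset.sum_congr rfl (fun t _ => this t), Finset.sum_neg_distrib]
      ring
    have hmid : ∀ p, m2 p = m1 p + ∑ t, x' t * Fc t p := by
      intro p
      have e : ∀ t : T, x' t * Fc t p
          = x t * Fc t p - lam * (π₁ t * Fc t p) - lam * (π₂ t * Fc t p) := by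
        intro t
        show (x t - lam * (π₁ t + π₂ t)) * Fc t p = _
        ring
      rw [Finset.sum_congr rfl (fun t _ => e t), Finset.sum_sub_distrib,
        Finset.sum_sub_distrib, ← Finset.mul_sum, ← Finset.mul_sum]
      have h4 : mtgt p - msrc p = ∑ t, x t * Fc t p := hx3 p
      show (1 - lam) * mtgt p + lam * mt2 p
          = (1 - lam) * msrc p + lam * mt1 p
            + (∑ t, x t * Fc t p - lam * ∑ t, π₁ t * Fc t p - lam * ∑ t, π₂ t * Fc t p)
      rw [hpar₁ p, hpar₂ p, ← h4]
      ring
    have hm1nn : ∀ p, 0 ≤ m1 p := by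
      intro p
      show 0 ≤ (1 - lam) * msrc p + lam * mt1 p
      have := hsrc p
      have := hmt1nn p
      nlinarith [hlamle1, hlampos]
    have hmark : ∀ p, (∃ t, 0 < x' t ∧ (0 < N.pre t p ∨ 0 < N.post t p)) →
        0 < m1 p ∧ 0 < m2 p := by
      rintro p ⟨t, hxt, hpp⟩
      have htU : t ∈ U := (hx'posU t).1 hxt
      have h1 : 0 < mt1 p := by
        refine hmark₁ p ⟨t, htU, ?_⟩
        rcases hpp with h | h
        · exact Or.inl (pre_pos_iff.1 h)
        · exact Or.inr (post_pos_iff.1 h)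
      have h2 : 0 < mt2 p := by
        refine hmark₂ p ⟨t, htU, ?_⟩
        rcases hpp with h | h
        · exact Or.inr (pre_pos_iff.1 h)
        · exact Or.inl (post_pos_iff.1 h)
      constructor
      · show 0 < (1 - lam) * msrc p + lam * mt1 p
        have := hsrc p
        nlinarith [hlamle1, hlampos]
      · show 0 < (1 - lam) * mtgt p + lam * mt2 p
        have := htgt p
        nlinarith [hlamle1, hlampos]
    obtain ⟨σm, hσm, hsuppm⟩ := fire_slices x' hx'nn m1 m2 hm1nn hmid hmark
    refine ⟨scaleSeq lam σ₁ ++ σm ++ (scaleSeq lam σ₂).reverse, ?_, ?_⟩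
    · rw [fireSeq_append]
      exact ⟨m2, fireSeq_append.2 ⟨m1, hrun1, hσm⟩, hrun3⟩
    · rw [seqSupport_append, seqSupport_append, seqSupport_scaleSeq,
        seqSupport_reverse, seqSupport_scaleSeq, hsupp₁, hsupp₂, hsuppm]
      have hxx : {t | 0 < x' t} = U := Set.ext fun t => hx'posU t
      rw [hxx]
      simp

theorem not_reachSupp_iff_local (N : PetriNet P T) (U : Set T) (msrc mtgt : P → ℝ)
    (hsrc : 0 ≤ msrc) (htgt : 0 ≤ mtgt) :
    ¬ N.reachSupp U msrc mtgt ↔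
      ((∃ y : P → ℝ,
          N.IsExclusionFun U U msrc mtgt (fun m => ∑ p : P, y p * m p)) ∨
        (∃ Q : Finset P, preSetOn N U Q ⊆ postSetOn N U Q ∧
          (postSetOn N U Q).Nonempty ∧ ∑ p ∈ Q, msrc p = 0) ∨
        (∃ R : Finset P, postSetOn N U R ⊆ preSetOn N U R ∧
          (preSetOn N U R).Nonempty ∧ ∑ p ∈ R, mtgt p = 0)) := by
  have hsrc' : ∀ p, 0 ≤ msrc p := fun p => hsrc p
  have htgt' : ∀ p, 0 ≤ mtgt p := fun p => htgt p
  constructor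
  · intro hnr
    by_contra hc
    rw [not_or, not_or] at hc
    exact hnr (reach_of_no_cert N U msrc mtgt hsrc' htgt' hc.1 hc.2.1 hc.2.2)
  · rintro (⟨y, hy⟩ | ⟨Q, h1, h2, h3⟩ | ⟨R, h1, h2, h3⟩) hreach
    · exact exclusion_sound _ hy hreach
    · exact siphon_sound hsrc' Q h1 h2 h3 hreach
    · obtain ⟨σ, hσ, hsupp⟩ := hreach
      have hrev : N.transpose.reachSupp U mtgt msrc :=
        ⟨σ.reverse, fireSeq_reverse hσ, by rw [seqSupport_reverse, hsupp]⟩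
      exact siphon_sound (N := N.transpose) htgt' R h1 h2 h3 hrev

end Main

end PetriNetProof

/-- Characterization of `U`-unreachability: `¬ (msrc ⇝_U mtgt)` iff there is a linear
exclusion function for `(U, U)`, or a suitable siphon of `N_U`, or a suitable trap of `N_U`. -/
theorem not_reachSupp_iff
    {P T : Type*} [Fintype P] [Fintype T]
    (N : PetriNet P T) (U : Set T) (msrc mtgt : P → ℝ)
    (hsrc : 0 ≤ msrc) (htgt : 0 ≤ mtgt) :
    ¬ N.reachSupp U msrc mtgt ↔
      ((∃ y : P → ℝ,
          IsExclusionFun N U U msrc mtgt (fun m => ∑ p : P, y p * m p)) ∨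
        (∃ Q : Finset P, preSetOn N U Q ⊆ postSetOn N U Q ∧
          (postSetOn N U Q).Nonempty ∧ ∑ p ∈ Q, msrc p = 0) ∨
        (∃ R : Finset P, postSetOn N U R ⊆ preSetOn N U R ∧
          (preSetOn N U R).Nonempty ∧ ∑ p ∈ R, mtgt p = 0)) := by
  exact PetriNetProof.not_reachSupp_iff_local N U msrc mtgt hsrc htgt
end

section
/- Every locally closed linear formula (with respect to a continuous Petri net N) is bi-invariant: if φ = φ₁ ∨ ⋯ ∨ φₙ is locally closed with respect to N, then its solution relation sol(φ) ⊆ (ℝ≥0)^P × (ℝ≥0)^P is forward invariant and backward invariant. -/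
namespace PetriNet

variable {P T : Type*}

/-- `m → m'` : some transition can be `α`-fired from `m`, leading to `m'`. -/
def step (N : PetriNet P T) (m m' : P → ℝ) : Prop :=
  ∃ (t : T) (α : ℝ), N.fire t α m m'

end PetriNet

open PetriNet

/-- An atomic proposition `a·m + a'·m' ∼ b` over pairs of markings, with `∼ ∈ {≤, <}`
(`strict = true` means `<`). -/
structure Atom (P : Type*) where
  a : P → ℝ
  a' : P → ℝ
  b : ℝ
  strict : Bool

namespace Atom

variable {P : Type*} [Fintype P]

/-- Solutions of an atomic proposition, as a set of pairs of markings. -/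
def sol (ψ : Atom P) : Set ((P → ℝ) × (P → ℝ)) :=
  {mm | 0 ≤ mm.1 ∧ 0 ≤ mm.2 ∧
    (if ψ.strict then (∑ p, ψ.a p * mm.1 p) + (∑ p, ψ.a' p * mm.2 p) < ψ.b
      else (∑ p, ψ.a p * mm.1 p) + (∑ p, ψ.a' p * mm.2 p) ≤ ψ.b)}

/-- The transpose of an atomic proposition swaps the two marking arguments. -/
def transpose (ψ : Atom P) : Atom P := ⟨ψ.a', ψ.a, ψ.b, ψ.strict⟩

/-- `ψ ⇝_t ψ'` : `ψ` `t`-implies `ψ'`. -/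
def timplies {T : Type*} (N : PetriNet P T) (t : T) (ψ ψ' : Atom P) : Prop :=
  ∀ (m m' m'' : P → ℝ) (α : ℝ),
    (m, m') ∈ ψ.sol → N.fire t α m' m'' → (m, m'') ∈ ψ'.sol

end Atom

/-- A clause (finite conjunction of atomic propositions) `t`-implies another clause. -/
def Clause.timplies {P T : Type*} [Fintype P] (N : PetriNet P T) (t : T)
    (c c' : List (Atom P)) : Prop :=
  ∀ ψ' ∈ c', ∃ ψ ∈ c, Atom.timplies N t ψ ψ'

/-- Solutions of a DNF formula (disjunction of clauses). -/
def Formula.sol {P : Type*} [Fintype P] (φ : List (List (Atom P))) :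
    Set ((P → ℝ) × (P → ℝ)) :=
  {mm | ∃ c ∈ φ, ∀ ψ ∈ c, mm ∈ ψ.sol}

/-- `φ` is locally closed w.r.t. `N`: it is a DNF formula of homogeneous atomic
propositions, each clause `t`-implies some clause for each transition `t`, and
likewise for the transposed clauses in the transpose net. -/
def LocallyClosed {P T : Type*} [Fintype P] (N : PetriNet P T)
    (φ : List (List (Atom P))) : Prop :=
  (∀ c ∈ φ, ∀ ψ ∈ c, ψ.b = 0) ∧
  (∀ t : T, ∀ c ∈ φ, ∃ c' ∈ φ, Clause.timplies N t c c') ∧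
  (∀ t : T, ∀ c ∈ φ, ∃ c' ∈ φ,
    Clause.timplies N.transpose t (c.map Atom.transpose) (c'.map Atom.transpose))

/-!
Forward invariance is immediate: a step `m' →(αt) m''` carries a satisfied clause to the clause it
`t`-implies. Backward invariance is the same argument for the transposed formula in `N^T`, because
`m →(αt) m'` in `N` is exactly `m' →(αt) m` in `N^T`.
-/

namespace PetriNet

variable {P T : Type*}

def ForwardInvariant (N : PetriNet P T) (R : Set ((P → ℝ) × (P → ℝ))) : Prop :=
  ∀ m m' m'' : P → ℝ, (m, m') ∈ R → N.step m' m'' → (m, m'') ∈ R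

def BackwardInvariant (N : PetriNet P T) (R : Set ((P → ℝ) × (P → ℝ))) : Prop :=
  ∀ m m' m'' : P → ℝ, (m', m'') ∈ R → N.step m m' → (m, m'') ∈ R

theorem fire.transpose {N : PetriNet P T} {t : T} {α : ℝ} {m m' : P → ℝ}
    (hf : N.fire t α m m') : N.transpose.fire t α m' m := by
  obtain ⟨hα, hpre, heq⟩ := hf
  refine ⟨hα, fun p => ?_, fun p => ?_⟩ <;>
    · simp only [PetriNet.transpose, PetriNet.pre, PetriNet.post] at hpre heq ⊢
      linarith [hpre p, heq p]

end PetriNet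

section

variable {P T : Type*} [Fintype P]

theorem Atom.mem_sol_transpose (ψ : Atom P) (x y : P → ℝ) :
    (x, y) ∈ ψ.transpose.sol ↔ (y, x) ∈ ψ.sol := by
  simp only [Atom.sol, Atom.transpose, Set.mem_ofPred_eq, add_comm (∑ p, ψ.a' p * _)]
  tauto

def Clause.sol (c : List (Atom P)) : Set ((P → ℝ) × (P → ℝ)) :=
  {mm | ∀ ψ ∈ c, mm ∈ ψ.sol}

theorem Clause.mem_sol_map_transpose (c : List (Atom P)) (x y : P → ℝ) :
    (x, y) ∈ Clause.sol (c.map Atom.transpose) ↔ (y, x) ∈ Clause.sol c := by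
  simp [Clause.sol, Atom.mem_sol_transpose]

theorem Clause.timplies.mem_sol_of_fire {N : PetriNet P T} {t : T} {c c' : List (Atom P)}
    (himp : Clause.timplies N t c c') {m m' m'' : P → ℝ} {α : ℝ}
    (hsol : (m, m') ∈ Clause.sol c) (hf : N.fire t α m' m'') :
    (m, m'') ∈ Clause.sol c' := fun ψ' hψ' => by
  obtain ⟨ψ, hψ, hψψ'⟩ := himp ψ' hψ'
  exact hψψ' m m' m'' α (hsol ψ hψ) hf

theorem Clause.timplies.mem_sol_of_fire_transpose {N : PetriNet P T} {t : T}
    {c c' : List (Atom P)}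
    (himp : Clause.timplies N.transpose t (c.map Atom.transpose) (c'.map Atom.transpose))
    {m m' m'' : P → ℝ} {α : ℝ}
    (hsol : (m', m'') ∈ Clause.sol c) (hf : N.fire t α m m') :
    (m, m'') ∈ Clause.sol c' := by
  rw [← Clause.mem_sol_map_transpose] at hsol ⊢
  exact himp.mem_sol_of_fire hsol hf.transpose

theorem forwardInvariant_sol_of_timplies {N : PetriNet P T} {φ : List (List (Atom P))}
    (himp : ∀ t : T, ∀ c ∈ φ, ∃ c' ∈ φ, Clause.timplies N t c c') :
    N.ForwardInvariant (Formula.sol φ) := by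
  rintro m m' m'' ⟨c, hc, hsol⟩ ⟨t, α, hf⟩
  obtain ⟨c', hc', hcc'⟩ := himp t c hc
  exact ⟨c', hc', hcc'.mem_sol_of_fire hsol hf⟩

theorem backwardInvariant_sol_of_timplies_transpose {N : PetriNet P T}
    {φ : List (List (Atom P))}
    (himp : ∀ t : T, ∀ c ∈ φ, ∃ c' ∈ φ,
      Clause.timplies N.transpose t (c.map Atom.transpose) (c'.map Atom.transpose)) :
    N.BackwardInvariant (Formula.sol φ) := by
  rintro m m' m'' ⟨c, hc, hsol⟩ ⟨t, α, hf⟩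
  obtain ⟨c', hc', hcc'⟩ := himp t c hc
  exact ⟨c', hc', hcc'.mem_sol_of_fire_transpose hsol hf⟩

end

/-- Locally closed formulas are bi-invariant: their solution relation is both
forward invariant and backward invariant. -/
theorem locallyClosed_biinvariant
    {P T : Type*} [Fintype P]
    (N : PetriNet P T) (φ : List (List (Atom P)))
    (h : LocallyClosed N φ) :
    (∀ m m' m'' : P → ℝ,
      (m, m') ∈ Formula.sol φ → N.step m' m'' → (m, m'') ∈ Formula.sol φ) ∧
    (∀ m m' m'' : P → ℝ,
      (m', m'') ∈ Formula.sol φ → N.step m m' → (m, m'') ∈ Formula.sol φ) := by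
  obtain ⟨-, hforward, hbackward⟩ := h
  exact ⟨forwardInvariant_sol_of_timplies hforward,
    backwardInvariant_sol_of_timplies_transpose hbackward⟩
end
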